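/- arXiv:1909.12468 — 6 statements merged into one kernel-verified Lean document; each statement's English description precedes it below -/
import Mathlib

section
/- A set E in a metric space is uniformly disconnected (i.e., there is C>1 such that for each ξ∈E and r>0 there is A⊆E with B(ξ,r/C)∩E ⊆ A ⊆ B(ξ,r) and dist(A, E∖A) ≥ r/C) if and only if there exists ε₀>0 such that no pair of distinct points ξ,ξ'∈E can be joined by an ε₀-chain in E, where an ε₀-chain from ξ to ξ' is a finite sequence ξ=ξ₀,ξ₁,…,ξₙ=ξ' in E with d(ξᵢ,ξᵢ₊₁) ≤ ε₀·d(ξ,ξ') for all i. -/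
/-!
If `E` is uniformly disconnected with constant `C`, the set `A` attached to `ξ` and `r = d(ξ, ξ')`
contains `ξ` but not `ξ'`, and no step shorter than `r / C` leaves it, so an `ε₀`-chain with
`ε₀ < 1 / C` cannot get from `ξ` to `ξ'`. Conversely, take for `A` the set of points reachable from
`ξ` by `ε₀ r / 2`-chains: the absence of `ε₀`-chains keeps `A` inside `B(ξ, r / 2)`, and `A` is
separated from `E \ A` by the chain step, so `C = 1 + 2 / ε₀` works.
-/

/-- `E` is uniformly disconnected: there is `C > 1` such that for each `ξ ∈ E` and `r > 0`
there is `A ⊆ E` with `B(ξ, r/C) ∩ E ⊆ A ⊆ B(ξ, r)` and `dist (A, E \ A) ≥ r/C`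
(stated pointwise, so it holds vacuously if `E \ A = ∅`). -/
def UnifDisc {X : Type*} [PseudoMetricSpace X] (E : Set X) : Prop :=
  ∃ C > (1 : ℝ), ∀ ξ ∈ E, ∀ r > (0 : ℝ), ∃ A ⊆ E,
    Metric.ball ξ (r / C) ∩ E ⊆ A ∧ A ⊆ Metric.ball ξ r ∧
    ∀ a ∈ A, ∀ b ∈ E \ A, r / C ≤ dist a b

open Metric

section

variable {X : Type*} [PseudoMetricSpace X]

def ChainReach (E : Set X) (δ : ℝ) (x y : X) : Prop :=
  ∃ (k : ℕ) (f : ℕ → X), f 0 = x ∧ f k = y ∧ (∀ l ≤ k, f l ∈ E) ∧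
    ∀ l < k, dist (f l) (f (l + 1)) ≤ δ

namespace ChainReach

variable {E : Set X} {δ δ' : ℝ} {x y z : X}

theorem refl (hx : x ∈ E) : ChainReach E δ x x :=
  ⟨0, fun _ ↦ x, rfl, rfl, fun _ _ ↦ hx, fun _ hl ↦ absurd hl (Nat.not_lt_zero _)⟩

theorem mono (h : ChainReach E δ x y) (hδ : δ ≤ δ') : ChainReach E δ' x y :=
  let ⟨k, f, h0, hk, hE, hstep⟩ := h
  ⟨k, f, h0, hk, hE, fun l hl ↦ (hstep l hl).trans hδ⟩

theorem snoc (h : ChainReach E δ x y) (hz : z ∈ E) (hyz : dist y z ≤ δ) :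
    ChainReach E δ x z := by
  obtain ⟨k, f, h0, hk, hE, hstep⟩ := h
  refine ⟨k + 1, fun n ↦ if n ≤ k then f n else z, by simp [h0], by simp, ?_, ?_⟩
  · intro l _
    dsimp only
    split_ifs with hl
    exacts [hE l hl, hz]
  · intro l hl
    rcases (Nat.lt_succ_iff.mp hl).lt_or_eq with hlk | rfl
    · simpa [hlk.le, Nat.succ_le_of_lt hlk] using hstep l hlk
    · simpa [hk] using hyz

theorem mem_right (h : ChainReach E δ x y) : y ∈ E :=
  let ⟨k, _, _, hk, hE, _⟩ := h
  hk ▸ hE k le_rfl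

theorem mem_of_forall_step_mem {A : Set X} (h : ChainReach E δ x y) (hx : x ∈ A)
    (hA : ∀ a ∈ A, ∀ b ∈ E, dist a b ≤ δ → b ∈ A) : y ∈ A := by
  obtain ⟨k, f, rfl, rfl, hE, hstep⟩ := h
  suffices ∀ l ≤ k, f l ∈ A from this k le_rfl
  intro l hl
  induction l with
  | zero => exact hx
  | succ l ih => exact hA _ (ih (Nat.le_of_succ_le hl)) _ (hE _ hl) (hstep l hl)

end ChainReach

theorem not_chainReach_of_unifDisc {E : Set X} (hE : UnifDisc E) :
    ∃ ε₀ > (0 : ℝ), ∀ ξ ∈ E, ∀ ξ' ∈ E, dist ξ ξ' ≠ 0 →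
      ¬ ChainReach E (ε₀ * dist ξ ξ') ξ ξ' := by
  obtain ⟨C, hC, hUD⟩ := hE
  have hC0 : 0 < C := one_pos.trans hC
  refine ⟨1 / (2 * C), by positivity, fun ξ hξ ξ' hξ' hne hchain ↦ ?_⟩
  set r := dist ξ ξ'
  have hr : 0 < r := lt_of_le_of_ne dist_nonneg (Ne.symm hne)
  obtain ⟨A, -, hball, hA, hsep⟩ := hUD ξ hξ r hr
  have hξA : ξ ∈ A := hball ⟨mem_ball_self (by positivity), hξ⟩
  have hξ'A : ξ' ∉ A := fun h ↦ (mem_ball'.mp (hA h)).false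
  have hstep_lt : 1 / (2 * C) * r < r / C :=
    calc 1 / (2 * C) * r = r / (2 * C) := by ring
      _ < r / C := div_lt_div_of_pos_left hr hC0 (by linarith)
  refine hξ'A (hchain.mem_of_forall_step_mem hξA fun a ha b hb hab ↦ ?_)
  by_contra hbA
  exact (hstep_lt.trans_le (hsep a ha b ⟨hb, hbA⟩)).not_ge hab

theorem unifDisc_of_not_chainReach {E : Set X} {ε₀ : ℝ} (hε₀ : 0 < ε₀)
    (hE : ∀ ξ ∈ E, ∀ ξ' ∈ E, dist ξ ξ' ≠ 0 → ¬ ChainReach E (ε₀ * dist ξ ξ') ξ ξ') :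
    UnifDisc E := by
  refine ⟨1 + 2 / ε₀, by simp [hε₀], fun ξ hξ r hr ↦ ?_⟩
  set C := 1 + 2 / ε₀
  set δ := ε₀ * r / 2
  have hrC : r / C ≤ δ := by
    calc r / C ≤ r / (2 / ε₀) := div_le_div_of_nonneg_left hr.le (by positivity) (by simp [C])
      _ = δ := by simp only [δ]; field_simp
  let A := {a | ChainReach E δ ξ a}
  have hnear : ∀ a ∈ A, dist ξ a < r / 2 := by
    intro a ha
    by_contra! hfar
    have hδ : δ ≤ ε₀ * dist ξ a := by
      simpa only [δ, mul_div_assoc] using mul_le_mul_of_nonneg_left hfar hε₀.le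
    exact hE ξ hξ a ha.mem_right ((half_pos hr).trans_le hfar).ne' (ha.mono hδ)
  refine ⟨A, fun a ha ↦ ha.mem_right, ?_, ?_, ?_⟩
  · rintro b ⟨hb, hbE⟩
    exact (ChainReach.refl hξ).snoc hbE ((mem_ball'.mp hb).le.trans hrC)
  · intro a ha
    exact mem_ball'.mpr ((hnear a ha).trans (half_lt_self hr))
  · rintro a ha b ⟨hbE, hbA⟩
    by_contra! hab
    exact hbA (ha.snoc hbE (hab.le.trans hrC))

end

/-- `E` is uniformly disconnected iff there is `ε₀ > 0` such that no pair of
distinct points `ξ, ξ' ∈ E` can be joined by an `ε₀`-chain in `E`, i.e. a finite sequence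
`ξ = f 0, f 1, …, f k = ξ'` in `E` with consecutive distances at most `ε₀ * dist ξ ξ'`. -/
theorem uniformlyDisconnected_iff_no_chain {X : Type*} [MetricSpace X] (E : Set X) :
    UnifDisc E ↔ ∃ ε₀ > (0 : ℝ), ∀ ξ ∈ E, ∀ ξ' ∈ E, ξ ≠ ξ' →
      ¬ ∃ (k : ℕ) (f : ℕ → X), f 0 = ξ ∧ f k = ξ' ∧ (∀ l ≤ k, f l ∈ E) ∧
        ∀ l < k, dist (f l) (f (l + 1)) ≤ ε₀ * dist ξ ξ' := by
  constructor
  · intro hE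
    obtain ⟨ε₀, hε₀, h⟩ := not_chainReach_of_unifDisc hE
    exact ⟨ε₀, hε₀, fun ξ hξ ξ' hξ' hne ↦ h ξ hξ ξ' hξ' (dist_ne_zero.mpr hne)⟩
  · rintro ⟨ε₀, hε₀, h⟩
    exact unifDisc_of_not_chainReach hε₀ fun ξ hξ ξ' hξ' hne ↦
      h ξ hξ ξ' hξ' (dist_ne_zero.mp hne)
end

section
/- Let A ⊆ ℝ^d be compact and uniformly disconnected with constant C>1. Then every δ-equivalence class A_x of A has diameter at most C·δ, and consequently 𝔑(δ, A) ≥ N_{Cδ}(A). -/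
/-- `x` and `y` are `δ`-equivalent in `A`: joined by a finite chain in `A` with
consecutive distances at most `δ`. -/
def DeltaEquiv {X : Type*} [PseudoMetricSpace X] (δ : ℝ) (A : Set X) (x y : X) : Prop :=
  ∃ (k : ℕ) (f : ℕ → X), f 0 = x ∧ f k = y ∧ (∀ l ≤ k, f l ∈ A) ∧
    ∀ l < k, dist (f l) (f (l + 1)) ≤ δ

/-- `𝔑(δ, A)`: the number of `δ`-equivalence classes of `A`. -/
noncomputable def NClass {X : Type*} [PseudoMetricSpace X] (δ : ℝ) (A : Set X) : ℕ :=
  Set.ncard {S : Set X | ∃ x ∈ A, S = {y | DeltaEquiv δ A x y}}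

/-- `N_δ(A)`: the smallest number of sets of diameter at most `δ` needed to cover `A`. -/
noncomputable def NCov {X : Type*} [PseudoMetricSpace X] (δ : ℝ) (A : Set X) : ℕ :=
  sInf {k : ℕ | ∃ U : Fin k → Set X, (A ⊆ ⋃ i, U i) ∧ ∀ i, Metric.diam (U i) ≤ δ}

/-!
A `δ`-chain starting at `x` cannot leave a piece `S` that is separated from the rest of `A` by a
gap wider than `δ`. Uniform disconnectedness supplies, for every `r > C δ`, such a piece around
`x` inside `B(x, r)`; hence the whole `δ`-class of `x` lies in `B(x, r)`, which gives the diameter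
bound. Since `A` is totally bounded, it has finitely many `δ`-classes, and these classes form a
cover of `A` by sets of diameter at most `C δ`.
-/

open Metric Relation

variable {X : Type*} [PseudoMetricSpace X]

def UnifDiscWith (C : ℝ) (A : Set X) : Prop :=
  ∀ ξ ∈ A, ∀ r > (0 : ℝ), ∃ S ⊆ A,
    ball ξ (r / C) ∩ A ⊆ S ∧ S ⊆ ball ξ r ∧ ∀ p ∈ S, ∀ q ∈ A \ S, r / C ≤ dist p q

def DeltaStep (δ : ℝ) (A : Set X) (p q : X) : Prop :=
  p ∈ A ∧ q ∈ A ∧ dist p q ≤ δ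

theorem DeltaStep.symm {δ : ℝ} {A : Set X} {p q : X} (h : DeltaStep δ A p q) :
    DeltaStep δ A q p :=
  ⟨h.2.1, h.1, dist_comm p q ▸ h.2.2⟩

namespace DeltaEquiv

variable {δ : ℝ} {A : Set X} {x y z : X}

theorem iff_reflTransGen :
    DeltaEquiv δ A x y ↔ x ∈ A ∧ ReflTransGen (DeltaStep δ A) x y := by
  constructor
  · rintro ⟨k, f, rfl, rfl, hmem, hdist⟩
    have hchain : ∀ l ≤ k, ReflTransGen (DeltaStep δ A) (f 0) (f l) := by
      intro l hl
      induction l with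
      | zero => exact .refl
      | succ l ih =>
        exact (ih (by omega)).tail ⟨hmem l (by omega), hmem (l + 1) hl, hdist l hl⟩
    exact ⟨hmem 0 k.zero_le, hchain k le_rfl⟩
  · rintro ⟨hx, h⟩
    induction h with
    | refl =>
      exact ⟨0, fun _ => x, rfl, rfl, fun _ _ => hx, fun l h => absurd h l.not_lt_zero⟩
    | @tail b c _ hbc ih =>
      obtain ⟨k, f, h0, hk, hmem, hdist⟩ := ih
      refine ⟨k + 1, fun l => if l ≤ k then f l else c, by simp [h0], by simp, ?_, ?_⟩
      · intro l hl
        dsimp only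
        split_ifs
        exacts [hmem l ‹_›, hbc.2.1]
      · intro l hl
        obtain hl | rfl := Nat.lt_succ_iff_lt_or_eq.mp hl
        · simpa [hl.le, Nat.succ_le_of_lt hl] using hdist l hl
        · simpa [hk] using hbc.2.2

theorem refl (hx : x ∈ A) : DeltaEquiv δ A x x :=
  iff_reflTransGen.2 ⟨hx, .refl⟩

theorem mem_left (h : DeltaEquiv δ A x y) : x ∈ A :=
  (iff_reflTransGen.1 h).1

theorem mem_right (h : DeltaEquiv δ A x y) : y ∈ A := by
  obtain ⟨k, f, -, rfl, hmem, -⟩ := h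
  exact hmem k le_rfl

theorem symm (h : DeltaEquiv δ A x y) : DeltaEquiv δ A y x :=
  iff_reflTransGen.2 ⟨h.mem_right, ReflTransGen.mono (fun _ _ => DeltaStep.symm) _ _
    (reflTransGen_swap.2 (iff_reflTransGen.1 h).2)⟩

theorem trans (hxy : DeltaEquiv δ A x y) (hyz : DeltaEquiv δ A y z) : DeltaEquiv δ A x z :=
  iff_reflTransGen.2
    ⟨hxy.mem_left, (iff_reflTransGen.1 hxy).2.trans (iff_reflTransGen.1 hyz).2⟩

theorem of_dist_le (hx : x ∈ A) (hy : y ∈ A) (hxy : dist x y ≤ δ) : DeltaEquiv δ A x y :=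
  iff_reflTransGen.2 ⟨hx, .single ⟨hx, hy, hxy⟩⟩

theorem setOf_eq (h : DeltaEquiv δ A x y) :
    {z | DeltaEquiv δ A x z} = {z | DeltaEquiv δ A y z} :=
  Set.ext fun _ => ⟨h.symm.trans, h.trans⟩

theorem mem_of_separated {S : Set X} (hsep : ∀ p ∈ S, ∀ q ∈ A \ S, δ < dist p q) (hx : x ∈ S)
    (h : DeltaEquiv δ A x y) : y ∈ S := by
  obtain ⟨-, hchain⟩ := iff_reflTransGen.1 h
  clear h
  induction hchain with
  | refl => exact hx
  | @tail b c _ hbc hb =>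
    by_contra hc
    exact (hsep b hb c ⟨hbc.2.1, hc⟩).not_ge hbc.2.2

theorem dist_le {C : ℝ} (hC : 0 < C) (hA : UnifDiscWith C A) (hδ : 0 ≤ δ)
    (h : DeltaEquiv δ A x y) : dist x y ≤ C * δ := by
  -- The gap `r / C` beats the step `δ` strictly only for `r > C δ`, hence the limiting argument.
  refine le_of_forall_gt_imp_ge_of_dense fun r hr => ?_
  have hr₀ : 0 < r := (mul_nonneg hC.le hδ).trans_lt hr
  have hδr : δ < r / C := by rwa [lt_div_iff₀ hC, mul_comm]
  obtain ⟨S, -, hball, hSr, hsep⟩ := hA x h.mem_left r hr₀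
  have hxS : x ∈ S := hball ⟨mem_ball_self (div_pos hr₀ hC), h.mem_left⟩
  have hyS : y ∈ S := mem_of_separated (fun p hp q hq => hδr.trans_le (hsep p hp q hq)) hxS h
  exact (mem_ball'.1 (hSr hyS)).le

theorem diam_setOf_le {C : ℝ} (hC : 0 < C) (hA : UnifDiscWith C A) (hδ : 0 ≤ δ) :
    diam {z | DeltaEquiv δ A x z} ≤ C * δ :=
  diam_le_of_forall_dist_le (mul_nonneg hC.le hδ) fun _ hy _ hz =>
    dist_le hC hA hδ (hy.symm.trans hz)

theorem finite_classes (hA : TotallyBounded A) (hδ : 0 < δ) :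
    {S : Set X | ∃ x ∈ A, S = {y | DeltaEquiv δ A x y}}.Finite := by
  obtain ⟨t, htA, ht, hcov⟩ := finite_approx_of_totallyBounded hA δ hδ
  refine (ht.image fun c => {y | DeltaEquiv δ A c y}).subset ?_
  rintro _ ⟨x, hx, rfl⟩
  obtain ⟨c, hct, hxc⟩ := Set.mem_iUnion₂.1 (hcov hx)
  exact ⟨c, hct, setOf_eq (of_dist_le (htA hct) hx (mem_ball'.1 hxc).le)⟩

end DeltaEquiv

theorem nCov_le_ncard {r : ℝ} {A : Set X} {𝒰 : Set (Set X)} (h𝒰 : 𝒰.Finite)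
    (hcov : A ⊆ ⋃₀ 𝒰) (hdiam : ∀ U ∈ 𝒰, diam U ≤ r) : NCov r A ≤ 𝒰.ncard := by
  have := h𝒰.to_subtype
  let e := (Finite.equivFin 𝒰).symm
  refine Nat.sInf_le ⟨fun i => e i, fun x hx => ?_, fun i => hdiam _ (e i).2⟩
  obtain ⟨U, hU, hxU⟩ := hcov hx
  exact Set.mem_iUnion.2 ⟨e.symm ⟨U, hU⟩, by rwa [e.apply_symm_apply]⟩

/-- for compact `A ⊆ ℝ^d` uniformly disconnected with constant `C > 1`,
every `δ`-equivalence class has diameter at most `C * δ`, and consequently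
`𝔑(δ, A) ≥ N_{Cδ}(A)`. -/
theorem class_diam_le_and_ncov_le_nclass {d : ℕ} (A : Set (EuclideanSpace ℝ (Fin d)))
    (hA : IsCompact A) (C : ℝ) (hC : 1 < C)
    (hud : ∀ ξ ∈ A, ∀ r > (0 : ℝ), ∃ S ⊆ A,
      Metric.ball ξ (r / C) ∩ A ⊆ S ∧ S ⊆ Metric.ball ξ r ∧
      ∀ p ∈ S, ∀ q ∈ A \ S, r / C ≤ dist p q)
    (δ : ℝ) (hδ : 0 < δ) :
    (∀ x ∈ A, Metric.diam {z | DeltaEquiv δ A x z} ≤ C * δ) ∧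
    NCov (C * δ) A ≤ NClass δ A := by
  have hdiam (x) : diam {z | DeltaEquiv δ A x z} ≤ C * δ :=
    DeltaEquiv.diam_setOf_le (zero_lt_one.trans hC) hud hδ.le
  refine ⟨fun x _ => hdiam x,
    nCov_le_ncard (DeltaEquiv.finite_classes hA.totallyBounded hδ) ?_ ?_⟩
  · exact fun x hx => ⟨_, ⟨x, hx, rfl⟩, DeltaEquiv.refl hx⟩
  · rintro _ ⟨x, -, rfl⟩
    exact hdiam x
end

section
/- Let A be a compact metric space with gap sequence {α_k}_{k≥1} and let γ>0. Then α_k ≍ k^{-1/γ} (meaning there is c≥1 with c^{-1} k^{-1/γ} ≤ α_k ≤ c k^{-1/γ} for all k) if and only if 𝔑(δ, A) ≍ δ^{-γ} (meaning there is c'≥1 with c'^{-1} δ^{-γ} ≤ 𝔑(δ,A) ≤ c' δ^{-γ} for all sufficiently small δ > 0). -/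
/-- `α` (indexed from `k = 1`) is the gap sequence of `A`: a non-increasing positive
sequence listing the jump points of `δ ↦ 𝔑(δ, A)` with multiplicity `𝔑(δ⁻) - 𝔑(δ)`;
equivalently, `𝔑(δ, A) = #{k ≥ 1 : α k > δ} + 1` for every `δ > 0`. -/
def IsGapSeq {X : Type*} [PseudoMetricSpace X] (A : Set X) (α : ℕ → ℝ) : Prop :=
  (∀ k, 1 ≤ k → 0 < α k) ∧ (∀ k l, 1 ≤ k → k ≤ l → α l ≤ α k) ∧
  ∀ δ > (0 : ℝ), NClass δ A = {k | 1 ≤ k ∧ δ < α k}.ncard + 1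

/-! For a non-increasing gap sequence, `𝔑(δ, A) = #{k ≥ 1 : δ < α k} + 1` says that `δ < α k`
exactly for `k < 𝔑(δ, A)`, so `δ ↦ 𝔑(δ, A)` and `k ↦ α k` are essentially inverse to each other,
just as `δ ↦ δ ^ (-γ)` and `k ↦ k ^ (-1/γ)` are. Bounds on `α` therefore bound `𝔑(δ, A)`, and
bounds on `𝔑` bound `α k` by taking `δ = α k` and `δ = α k / 2`; the finitely many gaps above the
threshold `δ₀` are absorbed into the constant. -/

open Set Filter Topology

lemma exists_one_le_bounds_of_bounds {ι : Type*} {p : ι → Prop} {f g : ι → ℝ} {a b : ℝ}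
    (ha : 0 < a) (hg : ∀ i, p i → 0 ≤ g i) (h : ∀ i, p i → a * g i ≤ f i ∧ f i ≤ b * g i) :
    ∃ c, 1 ≤ c ∧ ∀ i, p i → g i / c ≤ f i ∧ f i ≤ c * g i := by
  refine ⟨max 1 (max a⁻¹ b), le_max_left _ _, fun i hi => ⟨?_, ?_⟩⟩
  · have hc : (max 1 (max a⁻¹ b))⁻¹ ≤ a :=
      inv_le_of_inv_le₀ ha ((le_max_left _ _).trans (le_max_right _ _))
    calc g i / max 1 (max a⁻¹ b) = (max 1 (max a⁻¹ b))⁻¹ * g i := div_eq_inv_mul _ _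
      _ ≤ a * g i := mul_le_mul_of_nonneg_right hc (hg i hi)
      _ ≤ f i := (h i hi).1
  · exact (h i hi).2.trans (mul_le_mul_of_nonneg_right
      ((le_max_right _ _).trans (le_max_right _ _)) (hg i hi))

lemma Real.div_rpow_neg {x y : ℝ} (hx : 0 ≤ x) (hy : 0 ≤ y) (z : ℝ) :
    (x / y) ^ (-z) = y ^ z * x ^ (-z) := by
  rw [Real.div_rpow hx hy, Real.rpow_neg hy, div_inv_eq_mul, mul_comm]

lemma neg_one_div_eq_inv_neg (γ : ℝ) : -1 / γ = (-γ)⁻¹ := by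
  rw [inv_neg, neg_div, one_div]

def gapsAbove (α : ℕ → ℝ) (δ : ℝ) : Set ℕ := {k | 1 ≤ k ∧ δ < α k}

section GapSequence

variable {α : ℕ → ℝ} {γ δ δ₀ a b : ℝ} {k : ℕ}

lemma ncard_gapsAbove_lt (hα : AntitoneOn α (Ici 1)) (hk : 1 ≤ k) (hαk : α k ≤ δ) :
    (gapsAbove α δ).ncard < k := by
  have hsub : gapsAbove α δ ⊆ Ico 1 k := fun j ⟨hj, hδj⟩ =>
    ⟨hj, lt_of_not_ge fun hkj => (hαk.trans_lt hδj).not_ge (hα hk hj hkj)⟩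
  have := ncard_le_ncard hsub (finite_Ico 1 k)
  rw [ncard_Ico_nat] at this
  omega

lemma le_ncard_gapsAbove (hα : AntitoneOn α (Ici 1)) (hfin : (gapsAbove α δ).Finite)
    (hk : 1 ≤ k) (hδk : δ < α k) : k ≤ (gapsAbove α δ).ncard := by
  have hsub : Icc 1 k ⊆ gapsAbove α δ := fun j ⟨hj, hjk⟩ =>
    ⟨hj, hδk.trans_le (hα (mem_Ici.2 hj) (mem_Ici.2 hk) hjk)⟩
  simpa using ncard_le_ncard hsub hfin

lemma gapsAbove_subset_Icc (hγ : 0 < γ) (hb : 0 < b) (hδ : 0 < δ)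
    (h : ∀ k : ℕ, 1 ≤ k → α k ≤ b * (k : ℝ) ^ (-1 / γ)) :
    gapsAbove α δ ⊆ Icc 1 ⌊(δ / b) ^ (-γ)⌋₊ := by
  rintro k ⟨hk, hδk⟩
  have hkpos : (0 : ℝ) < k := by exact_mod_cast hk
  have : δ / b < (k : ℝ) ^ (-γ)⁻¹ := by
    rw [div_lt_iff₀' hb, ← neg_one_div_eq_inv_neg]
    exact hδk.trans_le (h k hk)
  rw [Real.lt_rpow_inv_iff_of_neg (by positivity) hkpos (by linarith)] at this
  exact ⟨hk, Nat.le_floor this.le⟩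

lemma rpow_le_ncard_gapsAbove_add_one (hα : AntitoneOn α (Ici 1)) (hγ : 0 < γ) (ha : 0 < a)
    (hδ : 0 < δ) (hfin : (gapsAbove α δ).Finite)
    (h : ∀ k : ℕ, 1 ≤ k → a * (k : ℝ) ^ (-1 / γ) ≤ α k) :
    (δ / a) ^ (-γ) ≤ (gapsAbove α δ).ncard + 1 := by
  set n := (gapsAbove α δ).ncard + 1
  have hn : 1 ≤ n := Nat.le_add_left 1 _
  have hαn : α n ≤ δ :=
    le_of_not_gt fun hlt => (le_ncard_gapsAbove hα hfin hn hlt).not_gt (Nat.lt_succ_self _)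
  have : (n : ℝ) ^ (-γ)⁻¹ ≤ δ / a := by
    rw [le_div_iff₀' ha, ← neg_one_div_eq_inv_neg]
    exact (h n hn).trans hαn
  rw [Real.rpow_inv_le_iff_of_neg (by positivity) (by positivity) (by linarith)] at this
  exact_mod_cast this

theorem ncard_gapsAbove_bounds (hα : AntitoneOn α (Ici 1)) (hγ : 0 < γ) (ha : 0 < a)
    (hb : 0 < b) (h : ∀ k : ℕ, 1 ≤ k → a * (k : ℝ) ^ (-1 / γ) ≤ α k ∧ α k ≤ b * (k : ℝ) ^ (-1 / γ))
    (hδ : 0 < δ) (hδ1 : δ ≤ 1) :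
    a ^ γ * δ ^ (-γ) ≤ (gapsAbove α δ).ncard + 1 ∧
      ((gapsAbove α δ).ncard + 1 : ℝ) ≤ (b ^ γ + 1) * δ ^ (-γ) := by
  have hsub := gapsAbove_subset_Icc hγ hb hδ fun k hk => (h k hk).2
  have hfin : (gapsAbove α δ).Finite := (finite_Icc _ _).subset hsub
  have hone : 1 ≤ δ ^ (-γ) :=
    Real.one_le_rpow_of_pos_of_le_one_of_nonpos hδ hδ1 (by linarith)
  constructor
  · rw [← Real.div_rpow_neg hδ.le ha.le]
    exact rpow_le_ncard_gapsAbove_add_one hα hγ ha hδ hfin fun k hk => (h k hk).1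
  · have hle : ((gapsAbove α δ).ncard : ℝ) ≤ (δ / b) ^ (-γ) := by
      have := ncard_le_ncard hsub (finite_Icc _ _)
      rw [ncard_Icc_nat, Nat.add_sub_cancel] at this
      exact (Nat.cast_le.2 this).trans (Nat.floor_le (by positivity))
    rw [Real.div_rpow_neg hδ.le hb.le] at hle
    linarith

lemma finite_gapsAbove_of_rpow_le (hγ : 0 < γ) (ha : 0 < a) (hδ₀ : 0 < δ₀)
    (hlow : ∀ δ, 0 < δ → δ ≤ δ₀ → a * δ ^ (-γ) ≤ (gapsAbove α δ).ncard + 1) (hδ : 0 < δ) :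
    (gapsAbove α δ).Finite := by
  by_contra hinf
  have hlarge : ∀ᶠ ε in 𝓝[>] 0, 1 < a * ε ^ (-γ) :=
    ((tendsto_rpow_neg_nhdsGT_zero (neg_lt_zero.2 hγ)).const_mul_atTop ha).eventually_gt_atTop 1
  obtain ⟨ε, hεa, hε0, hε⟩ := (hlarge.and (Ioo_mem_nhdsGT (lt_min hδ hδ₀))).exists
  -- an infinite set has `ncard = 0`, so the lower bound would keep `a * ε ^ (-γ)` below `1`
  have hinfε : (gapsAbove α ε).Infinite :=
    Set.Infinite.mono (fun k (⟨hk, hδk⟩ : k ∈ gapsAbove α δ) =>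
      ⟨hk, (hε.trans_le (min_le_left _ _)).trans hδk⟩) hinf
  have := hlow ε hε0 (hε.le.trans (min_le_right _ _))
  rw [hinfε.ncard, Nat.cast_zero, zero_add] at this
  linarith

lemma mul_rpow_le_of_rpow_le_ncard (hα : AntitoneOn α (Ici 1)) (hγ : 0 < γ) (ha : 0 < a)
    (hlow : ∀ δ, 0 < δ → δ ≤ δ₀ → a * δ ^ (-γ) ≤ (gapsAbove α δ).ncard + 1)
    (hk : 1 ≤ k) (hαk0 : 0 < α k) (hαk : α k ≤ δ₀) :
    a ^ γ⁻¹ * (k : ℝ) ^ (-1 / γ) ≤ α k := by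
  have hkpos : (0 : ℝ) < k := by exact_mod_cast hk
  have hcount : ((gapsAbove α (α k)).ncard : ℝ) + 1 ≤ k := by
    exact_mod_cast ncard_gapsAbove_lt hα hk le_rfl
  have : α k ^ (-γ) ≤ k / a := by
    rw [le_div_iff₀' ha]
    exact (hlow (α k) hαk0 hαk).trans hcount
  rw [← Real.rpow_inv_le_iff_of_neg (by positivity) hαk0 (by linarith), inv_neg,
    Real.div_rpow_neg hkpos.le ha.le] at this
  rwa [neg_one_div_eq_inv_neg, inv_neg]

lemma le_mul_rpow_of_ncard_le (hα : AntitoneOn α (Ici 1)) (hγ : 0 < γ) (hb : 0 < b)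
    (hfin : (gapsAbove α (α k / 2)).Finite)
    (hup : ∀ δ, 0 < δ → δ ≤ δ₀ → ((gapsAbove α δ).ncard + 1 : ℝ) ≤ b * δ ^ (-γ))
    (hk : 1 ≤ k) (hαk0 : 0 < α k) (hαk : α k / 2 ≤ δ₀) :
    α k ≤ 2 * b ^ γ⁻¹ * (k : ℝ) ^ (-1 / γ) := by
  have hkpos : (0 : ℝ) < k := by exact_mod_cast hk
  have hcount : (k : ℝ) ≤ (gapsAbove α (α k / 2)).ncard := by
    exact_mod_cast le_ncard_gapsAbove hα hfin hk (half_lt_self hαk0)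
  have : k / b < (α k / 2) ^ (-γ) := by
    rw [div_lt_iff₀' hb]
    linarith [hup (α k / 2) (half_pos hαk0) hαk]
  rw [← Real.lt_rpow_inv_iff_of_neg (half_pos hαk0) (by positivity) (by linarith), inv_neg,
    Real.div_rpow_neg hkpos.le hb.le, ← inv_neg, ← neg_one_div_eq_inv_neg] at this
  linarith

lemma le_mul_rpow_of_lt (hα : AntitoneOn α (Ici 1)) (hγ : 0 < γ) (hδ₀ : 0 < δ₀)
    (hfin : (gapsAbove α δ₀).Finite) (hk : 1 ≤ k) (hαk : δ₀ < α k) :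
    α k ≤ α 1 * ((gapsAbove α δ₀).ncard : ℝ) ^ γ⁻¹ * (k : ℝ) ^ (-1 / γ) := by
  have hkpos : (0 : ℝ) < k := by exact_mod_cast hk
  have hkM : (k : ℝ) ≤ (gapsAbove α δ₀).ncard := by
    exact_mod_cast le_ncard_gapsAbove hα hfin hk hαk
  have hα1 : α k ≤ α 1 := hα (mem_Ici.2 le_rfl) (mem_Ici.2 hk) hk
  have hone : 1 ≤ (k / ((gapsAbove α δ₀).ncard : ℝ)) ^ (-γ⁻¹) :=
    Real.one_le_rpow_of_pos_of_le_one_of_nonpos (div_pos hkpos (hkpos.trans_le hkM))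
      ((div_le_one (hkpos.trans_le hkM)).2 hkM) (by simp [hγ.le])
  rw [Real.div_rpow_neg hkpos.le (hkpos.trans_le hkM).le, ← inv_neg,
    ← neg_one_div_eq_inv_neg] at hone
  calc α k ≤ α 1 * 1 := by rw [mul_one]; exact hα1
    _ ≤ _ := by rw [mul_assoc]; gcongr; linarith

theorem exists_gap_bounds_of_ncard_gapsAbove_bounds (hα : AntitoneOn α (Ici 1))
    (hpos : ∀ k, 1 ≤ k → 0 < α k) (hγ : 0 < γ) (ha : 0 < a) (hb : 0 < b) (hδ₀ : 0 < δ₀)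
    (h : ∀ δ, 0 < δ → δ ≤ δ₀ → a * δ ^ (-γ) ≤ (gapsAbove α δ).ncard + 1 ∧
      ((gapsAbove α δ).ncard + 1 : ℝ) ≤ b * δ ^ (-γ)) :
    ∃ c, 1 ≤ c ∧ ∀ k : ℕ, 1 ≤ k →
      (k : ℝ) ^ (-1 / γ) / c ≤ α k ∧ α k ≤ c * (k : ℝ) ^ (-1 / γ) := by
  have hfin : ∀ δ, 0 < δ → (gapsAbove α δ).Finite := fun δ hδ =>
    finite_gapsAbove_of_rpow_le hγ ha hδ₀ (fun δ h0 h1 => (h δ h0 h1).1) hδ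
  refine exists_one_le_bounds_of_bounds (a := min (a ^ γ⁻¹) δ₀)
    (b := max (2 * b ^ γ⁻¹) (α 1 * ((gapsAbove α δ₀).ncard : ℝ) ^ γ⁻¹)) (by positivity)
    (fun k _ => by positivity) fun k hk => ⟨?_, ?_⟩
  · rcases le_or_gt (α k) δ₀ with hαk | hαk
    · calc min (a ^ γ⁻¹) δ₀ * (k : ℝ) ^ (-1 / γ) ≤ a ^ γ⁻¹ * (k : ℝ) ^ (-1 / γ) := by
            gcongr; exact min_le_left _ _
        _ ≤ α k := mul_rpow_le_of_rpow_le_ncard hα hγ ha (fun δ h0 h1 => (h δ h0 h1).1) hk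
            (hpos k hk) hαk
    · have hk1 : (k : ℝ) ^ (-1 / γ) ≤ 1 :=
        Real.rpow_le_one_of_one_le_of_nonpos (by exact_mod_cast hk) (by
          rw [neg_div]; exact neg_nonpos.2 (by positivity))
      calc min (a ^ γ⁻¹) δ₀ * (k : ℝ) ^ (-1 / γ) ≤ δ₀ * 1 :=
            mul_le_mul (min_le_right _ _) hk1 (by positivity) hδ₀.le
        _ ≤ α k := by linarith
  · rcases le_or_gt (α k / 2) δ₀ with hαk | hαk
    · refine (le_mul_rpow_of_ncard_le hα hγ hb (hfin _ (half_pos (hpos k hk)))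
        (fun δ h0 h1 => (h δ h0 h1).2) hk (hpos k hk) hαk).trans ?_
      gcongr
      exact le_max_left _ _
    · refine (le_mul_rpow_of_lt hα hγ hδ₀ (hfin δ₀ hδ₀) hk (by linarith)).trans ?_
      gcongr
      exact le_max_right _ _

end GapSequence

theorem gap_seq_asymp_iff_nclass_asymp_general {X : Type*} [MetricSpace X] (A : Set X)
    (α : ℕ → ℝ) (hα : IsGapSeq A α)
    (γ : ℝ) (hγ : 0 < γ) :
    (∃ c : ℝ, 1 ≤ c ∧ ∀ k : ℕ, 1 ≤ k →
      (k : ℝ) ^ (-1 / γ) / c ≤ α k ∧ α k ≤ c * (k : ℝ) ^ (-1 / γ)) ↔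
    (∃ c : ℝ, 1 ≤ c ∧ ∃ δ₀ > (0 : ℝ), ∀ δ : ℝ, 0 < δ → δ ≤ δ₀ →
      δ ^ (-γ) / c ≤ (NClass δ A : ℝ) ∧ (NClass δ A : ℝ) ≤ c * δ ^ (-γ)) := by
  obtain ⟨hpos, hmono, hN⟩ := hα
  have hanti : AntitoneOn α (Ici 1) := fun k hk l _ hkl => hmono k l hk hkl
  have hN' : ∀ δ, 0 < δ → (NClass δ A : ℝ) = (gapsAbove α δ).ncard + 1 := fun δ hδ => by
    rw [hN δ hδ]; push_cast; rfl
  constructor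
  · rintro ⟨c, hc, hbd⟩
    have hc0 : 0 < c := one_pos.trans_le hc
    obtain ⟨c', hc', hbd'⟩ := exists_one_le_bounds_of_bounds (p := fun δ : ℝ => 0 < δ ∧ δ ≤ 1)
      (Real.rpow_pos_of_pos (inv_pos.2 hc0) γ) (fun δ hδ => Real.rpow_nonneg hδ.1.le _)
      fun δ hδ => ncard_gapsAbove_bounds hanti hγ (inv_pos.2 hc0) hc0
        (fun k hk => by simpa only [div_eq_inv_mul] using hbd k hk) hδ.1 hδ.2
    refine ⟨c', hc', 1, one_pos, fun δ hδ hδ1 => ?_⟩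
    rw [hN' δ hδ]
    exact hbd' δ ⟨hδ, hδ1⟩
  · rintro ⟨c, hc, δ₀, hδ₀, hbd⟩
    have hc0 : 0 < c := one_pos.trans_le hc
    refine exists_gap_bounds_of_ncard_gapsAbove_bounds hanti hpos hγ (inv_pos.2 hc0) hc0 hδ₀
      fun δ hδ hδ₀ => ?_
    rw [← hN' δ hδ, ← div_eq_inv_mul]
    exact hbd δ hδ hδ₀

/-- for a compact (infinite) metric space `A` with gap sequence `α` and `γ > 0`:
`α k ≍ k ^ (-1/γ)` if and only if `𝔑(δ, A) ≍ δ ^ (-γ)` for all sufficiently small `δ > 0`. -/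
theorem gap_seq_asymp_iff_nclass_asymp {X : Type*} [MetricSpace X] (A : Set X)
    (hA : IsCompact A) (hinf : A.Infinite) (α : ℕ → ℝ) (hα : IsGapSeq A α)
    (γ : ℝ) (hγ : 0 < γ) :
    (∃ c : ℝ, 1 ≤ c ∧ ∀ k : ℕ, 1 ≤ k →
      (k : ℝ) ^ (-1 / γ) / c ≤ α k ∧ α k ≤ c * (k : ℝ) ^ (-1 / γ)) ↔
    (∃ c : ℝ, 1 ≤ c ∧ ∃ δ₀ > (0 : ℝ), ∀ δ : ℝ, 0 < δ → δ ≤ δ₀ →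
      δ ^ (-γ) / c ≤ (NClass δ A : ℝ) ∧ (NClass δ A : ℝ) ≤ c * δ ^ (-γ)) :=
  gap_seq_asymp_iff_nclass_asymp_general A α hα γ hγ
end

section
/- Let F ⊆ [0,1] be the self-similar set generated by the maps φ_i(y) = b_i y + d_i for i ∈ 𝓘 ⊆ {1,…,m}, where 0 < b_i < 1, d_1 = 0, d_i = b_1 + ⋯ + b_{i−1}, and ∑_{i=1}^m b_i = 1. Suppose 𝓘 ≠ {1,…,m}, i.e., there exists some i with n_i = 0, so that some open interval I ⊆ [0,1] satisfies I ∩ F = ∅. For δ > 0, let 𝓘_δ be the set of words i₁…i_k over 𝓘 with b_{i₁}⋯b_{i_k} ≤ δ < b_{i₁}⋯b_{i_{k−1}}, and say w, w' ∈ 𝓘_δ are δ-connected if there is a chain w = w₀, w₁, …, w_n = w' in 𝓘_δ with dist(φ_{w_ℓ}(F), φ_{w_{ℓ+1}}(F)) ≤ δ for all ℓ. Then sup over δ > 0 and w ∈ 𝓘_δ of the number of words δ-connected to w is finite; in fact it is at most 2 η^{-1} b_*^{-2}, where η = |I| and b_* = min_i b_i. -/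
/-- Composition `φ_w = φ_{i₁} ∘ ⋯ ∘ φ_{i_ℓ}` of the maps `φ_i (y) = b i * y + dd i`
along a finite word `w`. -/
def phiWord {m : ℕ} (b dd : Fin m → ℝ) : List (Fin m) → ℝ → ℝ
  | [] => id
  | i :: w => fun y => b i * phiWord b dd w y + dd i

/-- The distance `dist(A, B) = inf {|a - b| : a ∈ A, b ∈ B}` between two sets of reals. -/
noncomputable def setDist (A B : Set ℝ) : ℝ := sInf (Set.image2 dist A B)

/-- The `δ`-stopping words over the alphabet `I`:
`𝓘_δ = {i₁…i_k : b_{i₁}⋯b_{i_k} ≤ δ < b_{i₁}⋯b_{i_{k-1}}}`. -/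
def IdxDelta {m : ℕ} (b : Fin m → ℝ) (I : Finset (Fin m)) (δ : ℝ) : Set (List (Fin m)) :=
  {w | w ≠ [] ∧ (∀ i ∈ w, i ∈ I) ∧ (w.map b).prod ≤ δ ∧ δ < (w.dropLast.map b).prod}

/-- `w` and `w'` in `𝓘_δ` are `δ`-connected: there is a chain `w = g 0, …, g k = w'` in
`𝓘_δ` with `dist(φ_{g l}(F), φ_{g (l+1)}(F)) ≤ δ` for all `l`. -/
def DeltaConn {m : ℕ} (b dd : Fin m → ℝ) (I : Finset (Fin m)) (F : Set ℝ) (δ : ℝ)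
    (w w' : List (Fin m)) : Prop :=
  ∃ (k : ℕ) (g : ℕ → List (Fin m)), g 0 = w ∧ g k = w' ∧
    (∀ l ≤ k, g l ∈ IdxDelta b I δ) ∧
    ∀ l < k, setDist (phiWord b dd (g l) '' F) (phiWord b dd (g (l + 1)) '' F) ≤ δ

/-!
A word of `𝓘_δ` has a cylinder `[φ_w 0, φ_w 1]` of length in `(b_* δ, δ]`, and distinct words
have cylinders with disjoint interiors. Stop the words of a `δ`-component at the coarser scale
`t = δ / (η b_*)`: each nonempty stopping cylinder contains a copy of the gap of length
`> η b_* t = δ`, which no `δ`-chain can jump across, so a stopping cylinder lying between two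
others would disconnect the component. Hence the component sits in at most two cylinders of
length `≤ t`, and comparing lengths gives at most `2 t / (b_* δ) = 2 / (η b_*²)` words.
-/

open Set

variable {m : ℕ}

section Words

variable {b : Fin m → ℝ} (dd : Fin m → ℝ)

theorem phiWord_apply (w : List (Fin m)) (y : ℝ) :
    phiWord b dd w y = (w.map b).prod * y + phiWord b dd w 0 := by
  induction w generalizing y with
  | nil => simp [phiWord]
  | cons i w ih =>
    simp only [phiWord, List.map_cons, List.prod_cons]
    rw [ih y, ih 0]
    ring

theorem phiWord_append (w₁ w₂ : List (Fin m)) (y : ℝ) :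
    phiWord b dd (w₁ ++ w₂) y = phiWord b dd w₁ (phiWord b dd w₂ y) := by
  induction w₁ with
  | nil => rfl
  | cons i w ih => simp [phiWord, ih]

theorem prod_map_pos (hb : ∀ i, 0 < b i) (w : List (Fin m)) : 0 < (w.map b).prod :=
  List.prod_pos (by simpa using fun i _ => hb i)

theorem phiWord_strictMono (hb : ∀ i, 0 < b i) (w : List (Fin m)) :
    StrictMono (phiWord b dd w) := by
  intro x y hxy
  rw [phiWord_apply dd w x, phiWord_apply dd w y]
  have := prod_map_pos hb w
  gcongr

theorem prod_map_le_one (hb₀ : ∀ i, 0 < b i) (hb₁ : ∀ i, b i ≤ 1) (w : List (Fin m)) :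
    (w.map b).prod ≤ 1 := by
  induction w with
  | nil => simp
  | cons i w ih => simpa using mul_le_one₀ (hb₁ i) (prod_map_pos hb₀ w).le ih

theorem prod_map_le_of_prefix (hb₀ : ∀ i, 0 < b i) (hb₁ : ∀ i, b i ≤ 1)
    {w₁ w₂ : List (Fin m)} (h : w₁ <+: w₂) : (w₂.map b).prod ≤ (w₁.map b).prod := by
  obtain ⟨r, rfl⟩ := h
  rw [List.map_append, List.prod_append]
  exact mul_le_of_le_one_right (prod_map_pos hb₀ w₁).le (prod_map_le_one hb₀ hb₁ r)

end Words

theorem List.prefix_dropLast_of_prefix_of_ne {α : Type*} {l₁ l₂ : List α} (h : l₁ <+: l₂)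
    (hne : l₁ ≠ l₂) : l₁ <+: l₂.dropLast := by
  obtain ⟨r, rfl⟩ := h
  have hr : r ≠ [] := by rintro rfl; simp at hne
  rw [List.dropLast_append_of_ne_nil hr]
  exact List.prefix_append _ _

structure IsTiling (b dd : Fin m → ℝ) : Prop where
  pos : ∀ i, 0 < b i
  sum_eq_one : ∑ i, b i = 1
  dd_eq : ∀ i, dd i = ∑ k ∈ Finset.univ.filter (fun k => k < i), b k

namespace IsTiling

variable {b dd : Fin m → ℝ} (h : IsTiling b dd)
include h

theorem add_eq_sum (i : Fin m) :
    dd i + b i = ∑ k ∈ Finset.univ.filter (fun k => k ≤ i), b k := by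
  have hins : Finset.univ.filter (fun k => k ≤ i) =
      insert i (Finset.univ.filter (fun k => k < i)) := by
    ext k
    simp [le_iff_lt_or_eq, or_comm]
  rw [hins, Finset.sum_insert (by simp), h.dd_eq, add_comm]

theorem dd_nonneg (i : Fin m) : 0 ≤ dd i := by
  rw [h.dd_eq]
  exact Finset.sum_nonneg fun k _ => (h.pos k).le

theorem add_le_one (i : Fin m) : dd i + b i ≤ 1 := by
  rw [h.add_eq_sum, ← h.sum_eq_one]
  exact Finset.sum_le_sum_of_subset_of_nonneg (Finset.subset_univ _) fun k _ _ => (h.pos k).le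

theorem add_le_of_lt {i j : Fin m} (hij : i < j) : dd i + b i ≤ dd j := by
  rw [h.add_eq_sum, h.dd_eq]
  refine Finset.sum_le_sum_of_subset_of_nonneg (fun k hk => ?_) fun k _ _ => (h.pos k).le
  simp only [Finset.mem_filter, Finset.mem_univ, true_and] at hk ⊢
  exact hk.trans_lt hij

theorem le_one (i : Fin m) : b i ≤ 1 := by
  linarith [h.dd_nonneg i, h.add_le_one i]

theorem phiWord_mem_Icc (w : List (Fin m)) {x : ℝ} (hx : x ∈ Icc (0 : ℝ) 1) :
    phiWord b dd w x ∈ Icc (0 : ℝ) 1 := by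
  induction w with
  | nil => exact hx
  | cons i w ih =>
    obtain ⟨h₀, h₁⟩ := ih
    have := h.pos i
    constructor <;> simp only [phiWord] <;> nlinarith [h.dd_nonneg i, h.add_le_one i]

theorem phiWord_mem_Icc_of_prefix {W w : List (Fin m)} (hW : W <+: w) {x : ℝ}
    (hx : x ∈ Icc (0 : ℝ) 1) : phiWord b dd w x ∈ Icc (phiWord b dd W 0) (phiWord b dd W 1) := by
  obtain ⟨r, rfl⟩ := hW
  obtain ⟨h₀, h₁⟩ := h.phiWord_mem_Icc r hx
  rw [phiWord_append]
  exact ⟨(phiWord_strictMono dd h.pos W).monotone h₀, (phiWord_strictMono dd h.pos W).monotone h₁⟩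

theorem phiWord_one_le_or_of_not_prefix {w₁ w₂ : List (Fin m)} (h₁₂ : ¬ w₁ <+: w₂)
    (h₂₁ : ¬ w₂ <+: w₁) :
    phiWord b dd w₁ 1 ≤ phiWord b dd w₂ 0 ∨ phiWord b dd w₂ 1 ≤ phiWord b dd w₁ 0 := by
  induction w₁ generalizing w₂ with
  | nil => exact absurd List.nil_prefix h₁₂
  | cons i w₁ ih =>
    obtain _ | ⟨j, w₂⟩ := w₂
    · exact absurd List.nil_prefix h₂₁
    have h₁ := h.phiWord_mem_Icc w₁ (x := 1) (by simp)
    have h₀ := h.phiWord_mem_Icc w₁ (x := 0) (by simp)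
    have h₁' := h.phiWord_mem_Icc w₂ (x := 1) (by simp)
    have h₀' := h.phiWord_mem_Icc w₂ (x := 0) (by simp)
    have hi := h.pos i
    have hj := h.pos j
    simp only [phiWord]
    rcases lt_trichotomy i j with hij | rfl | hji
    · left
      nlinarith [h.add_le_of_lt hij, h₁.2, h₀'.1]
    · simp only [List.cons_prefix_cons, true_and] at h₁₂ h₂₁
      rcases ih h₁₂ h₂₁ with hle | hle
      · left; nlinarith
      · right; nlinarith
    · right
      nlinarith [h.add_le_of_lt hji, h₁'.2, h₀.1]

end IsTiling

section Attractor

variable {b dd : Fin m → ℝ} {I : Finset (Fin m)} {F : Set ℝ}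

theorem mapsTo_phiWord (hF : F = ⋃ i ∈ I, (fun y => b i * y + dd i) '' F)
    {w : List (Fin m)} (hw : ∀ i ∈ w, i ∈ I) : MapsTo (phiWord b dd w) F F := by
  induction w with
  | nil => exact mapsTo_id F
  | cons i w ih =>
    intro x hx
    have hwx := ih (fun j hj => hw j (List.mem_cons_of_mem i hj)) hx
    rw [hF]
    exact mem_biUnion (hw i List.mem_cons_self) ⟨_, hwx, rfl⟩

/-- Points of `F` in another first-level tile cannot enter the copied gap, and those in the
same tile pull back to the shorter word. -/
theorem IsTiling.Ioo_phiWord_inter_eq_empty (h : IsTiling b dd) (hF₀₁ : F ⊆ Icc 0 1)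
    (hF : F = ⋃ i ∈ I, (fun y => b i * y + dd i) '' F) {u v : ℝ} (hu : 0 ≤ u) (hv : v ≤ 1)
    (hgap : Ioo u v ∩ F = ∅) {w : List (Fin m)} (hw : ∀ i ∈ w, i ∈ I) :
    Ioo (phiWord b dd w u) (phiWord b dd w v) ∩ F = ∅ := by
  induction w with
  | nil => exact hgap
  | cons i w ih =>
    have ih := ih fun j hj => hw j (List.mem_cons_of_mem i hj)
    refine eq_empty_of_forall_notMem fun x ⟨⟨hux, hxv⟩, hxF⟩ => ?_
    have hwu : 0 ≤ phiWord b dd w u :=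
      (h.phiWord_mem_Icc w (x := 0) (by simp)).1.trans ((phiWord_strictMono dd h.pos w).monotone hu)
    have hwv : phiWord b dd w v ≤ 1 :=
      ((phiWord_strictMono dd h.pos w).monotone hv).trans (h.phiWord_mem_Icc w (x := 1) (by simp)).2
    simp only [phiWord] at hux hxv
    rw [hF] at hxF
    simp only [mem_iUnion, mem_image] at hxF
    obtain ⟨j, -, y, hyF, rfl⟩ := hxF
    obtain ⟨hy₀, hy₁⟩ := hF₀₁ hyF
    have hi := h.pos i
    have hj := h.pos j
    rcases lt_trichotomy j i with hji | rfl | hij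
    · nlinarith [h.add_le_of_lt hji]
    · have hy : y ∈ Ioo (phiWord b dd w u) (phiWord b dd w v) :=
        ⟨by nlinarith, by nlinarith⟩
      exact (eq_empty_iff_forall_notMem.1 ih) y ⟨hy, hyF⟩
    · nlinarith [h.add_le_of_lt hij]

end Attractor

section Stopping

/-- Unlike in `IdxDelta`, the empty word is allowed: it is the stopping word at every scale
`t ≥ 1`. -/
def IsStopping (b : Fin m → ℝ) (t : ℝ) (W : List (Fin m)) : Prop :=
  (W.map b).prod ≤ t ∧ (W ≠ [] → t < (W.dropLast.map b).prod)

variable {b : Fin m → ℝ} {t : ℝ}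

theorem isStopping_of_mem_idxDelta {I : Finset (Fin m)} {w : List (Fin m)}
    (hw : w ∈ IdxDelta b I t) : IsStopping b t w :=
  ⟨hw.2.2.1, fun _ => hw.2.2.2⟩

theorem IsStopping.mul_lt_prod (hb : ∀ i, 0 < b i) {c : ℝ} (hc : 0 < c) (hcb : ∀ i, c ≤ b i)
    {W : List (Fin m)} (hW : IsStopping b t W) (hne : W ≠ []) : c * t < (W.map b).prod := by
  have hlt := hW.2 hne
  have hP := prod_map_pos hb W.dropLast
  rw [← List.dropLast_append_getLast hne, List.map_append, List.prod_append]
  simp only [List.map_cons, List.map_nil, List.prod_singleton]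
  calc c * t < c * (W.dropLast.map b).prod := by gcongr
    _ ≤ (W.dropLast.map b).prod * b (W.getLast hne) := by
      rw [mul_comm]; gcongr; exact hcb _

theorem IsStopping.eq_of_prefix (hb₀ : ∀ i, 0 < b i) (hb₁ : ∀ i, b i ≤ 1)
    {W₁ W₂ : List (Fin m)} (h₁ : IsStopping b t W₁) (h₂ : IsStopping b t W₂) (h : W₁ <+: W₂) :
    W₁ = W₂ := by
  by_contra hne
  have hW₂ : W₂ ≠ [] := by rintro rfl; exact hne (List.prefix_nil.1 h)
  have := prod_map_le_of_prefix hb₀ hb₁ (List.prefix_dropLast_of_prefix_of_ne h hne)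
  linarith [h₁.1, h₂.2 hW₂]

theorem exists_prefix_isStopping {w : List (Fin m)} (hw : (w.map b).prod ≤ t) :
    ∃ W, W <+: w ∧ IsStopping b t W := by
  induction w using List.reverseRecOn with
  | nil => exact ⟨[], List.prefix_rfl, hw, fun h => absurd rfl h⟩
  | append_singleton w i ih =>
    by_cases hwt : (w.map b).prod ≤ t
    · obtain ⟨W, hW, hWt⟩ := ih hwt
      exact ⟨W, hW.trans (List.prefix_append _ _), hWt⟩
    · refine ⟨w ++ [i], List.prefix_rfl, hw, fun _ => ?_⟩
      rw [List.dropLast_concat]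
      exact not_le.1 hwt

end Stopping

section Counting

variable {α : Type*} {f g : α → ℝ} {c L R : ℝ}

theorem Finset.card_mul_le_of_pairwise (s : Finset α)
    (hlen : ∀ a ∈ s, c ≤ g a - f a) (hsub : ∀ a ∈ s, L ≤ f a ∧ g a ≤ R)
    (hdisj : (s : Set α).Pairwise fun a a' => g a ≤ f a' ∨ g a' ≤ f a) (hLR : L ≤ R) :
    s.card * c ≤ R - L := by
  have hpd : (s : Set α).PairwiseDisjoint fun a => Set.Ioo (f a) (g a) := by
    refine hdisj.mono' fun a a' haa' => ?_
    rcases haa' with h | h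
    · exact (Set.Ioc_disjoint_Ioc_of_le h).mono Set.Ioo_subset_Ioc_self Set.Ioo_subset_Ioc_self
    · exact ((Set.Ioc_disjoint_Ioc_of_le h).mono Set.Ioo_subset_Ioc_self
        Set.Ioo_subset_Ioc_self).symm
  open MeasureTheory in
  have hvol : (s.card : ENNReal) * ENNReal.ofReal c ≤ ENNReal.ofReal (R - L) :=
    calc (s.card : ENNReal) * ENNReal.ofReal c
        ≤ ∑ a ∈ s, ENNReal.ofReal (g a - f a) := by
          rw [← nsmul_eq_mul]
          exact Finset.card_nsmul_le_sum _ _ _ fun a ha => ENNReal.ofReal_le_ofReal (hlen a ha)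
      _ = volume (⋃ a ∈ s, Set.Ioo (f a) (g a)) := by
          rw [measure_biUnion_finset hpd fun a _ => measurableSet_Ioo]
          simp [Real.volume_Ioo]
      _ ≤ volume (Set.Icc L R) := by
          refine measure_mono (iUnion₂_subset fun a ha => ?_)
          exact Set.Ioo_subset_Icc_self.trans (Set.Icc_subset_Icc (hsub a ha).1 (hsub a ha).2)
      _ = ENNReal.ofReal (R - L) := Real.volume_Icc
  rw [← ENNReal.ofReal_natCast, ← ENNReal.ofReal_mul (by positivity)] at hvol
  exact (ENNReal.ofReal_le_ofReal_iff (sub_nonneg.2 hLR)).1 hvol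

theorem Set.finite_and_ncard_mul_le_of_pairwise {T : Set α} (hc : 0 < c)
    (hlen : ∀ a ∈ T, c ≤ g a - f a) (hsub : ∀ a ∈ T, L ≤ f a ∧ g a ≤ R)
    (hdisj : T.Pairwise fun a a' => g a ≤ f a' ∨ g a' ≤ f a) (hLR : L ≤ R) :
    T.Finite ∧ T.ncard * c ≤ R - L := by
  have hcard : ∀ s : Finset α, ↑s ⊆ T → s.card * c ≤ R - L := fun s hs =>
    s.card_mul_le_of_pairwise (fun a ha => hlen a (hs ha)) (fun a ha => hsub a (hs ha))
      (hdisj.mono hs) hLR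
  have hfin : T.Finite := by
    by_contra hinf
    obtain ⟨s, hsT, hs⟩ := Set.Infinite.exists_subset_card_eq hinf (⌊(R - L) / c⌋₊ + 1)
    have hlt := (div_lt_iff₀ hc).1 (Nat.lt_floor_add_one ((R - L) / c))
    have := hcard s hsT
    rw [hs] at this
    push_cast at this
    linarith
  refine ⟨hfin, ?_⟩
  rw [Set.ncard_eq_toFinset_card T hfin]
  exact hcard _ (by simp)

end Counting

namespace IsTiling

variable {b dd : Fin m → ℝ} (h : IsTiling b dd) {t : ℝ}
include h

theorem phiWord_one_le_of_isStopping {W₁ W₂ : List (Fin m)} (h₁ : IsStopping b t W₁)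
    (h₂ : IsStopping b t W₂) (hne : W₁ ≠ W₂) (hle : phiWord b dd W₁ 0 ≤ phiWord b dd W₂ 0) :
    phiWord b dd W₁ 1 ≤ phiWord b dd W₂ 0 := by
  have h₁₂ : ¬ W₁ <+: W₂ := fun hp => hne (h₁.eq_of_prefix h.pos h.le_one h₂ hp)
  have h₂₁ : ¬ W₂ <+: W₁ := fun hp => hne (h₂.eq_of_prefix h.pos h.le_one h₁ hp).symm
  refine (h.phiWord_one_le_or_of_not_prefix h₁₂ h₂₁).resolve_right fun h' => ?_
  have := phiWord_strictMono dd h.pos W₂ zero_lt_one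
  linarith

/-- The cylinders of the words in `T` have length above `c * t`, disjoint interiors, and lie in
the cylinder of `W`. -/
theorem finite_and_ncard_mul_le_prod (ht : 0 < t) {c : ℝ} (hc : 0 < c) (hcb : ∀ i, c ≤ b i)
    {T : Set (List (Fin m))} (hT : ∀ w ∈ T, w ≠ [] ∧ IsStopping b t w) {W : List (Fin m)}
    (hW : ∀ w ∈ T, W <+: w) : T.Finite ∧ T.ncard * (c * t) ≤ (W.map b).prod := by
  have hlen : ∀ w : List (Fin m), phiWord b dd w 1 - phiWord b dd w 0 = (w.map b).prod :=
    fun w => by rw [phiWord_apply dd w 1]; ring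
  rw [← hlen]
  refine Set.finite_and_ncard_mul_le_of_pairwise (f := (phiWord b dd · 0))
    (g := (phiWord b dd · 1)) (by positivity) (fun w hw => ?_) (fun w hw => ?_) ?_ ?_
  · rw [hlen]
    exact ((hT w hw).2.mul_lt_prod h.pos hc hcb (hT w hw).1).le
  · exact ⟨(h.phiWord_mem_Icc_of_prefix (hW w hw) (x := 0) (by simp)).1,
      (h.phiWord_mem_Icc_of_prefix (hW w hw) (x := 1) (by simp)).2⟩
  · intro w₁ hw₁ w₂ hw₂ hne
    rcases le_total (phiWord b dd w₁ 0) (phiWord b dd w₂ 0) with hle | hle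
    · exact Or.inl (h.phiWord_one_le_of_isStopping (hT w₁ hw₁).2 (hT w₂ hw₂).2 hne hle)
    · exact Or.inr (h.phiWord_one_le_of_isStopping (hT w₂ hw₂).2 (hT w₁ hw₁).2 hne.symm hle)
  · exact (phiWord_strictMono dd h.pos W zero_lt_one).le

end IsTiling

section Chains

theorem setDist_nonneg (A B : Set ℝ) : 0 ≤ setDist A B :=
  Real.sInf_nonneg (by rintro _ ⟨a, -, b, -, rfl⟩; exact dist_nonneg)

theorem setDist_comm (A B : Set ℝ) : setDist A B = setDist B A := by
  rw [setDist, setDist, image2_swap]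
  simp_rw [dist_comm]

theorem sub_le_setDist {A B : Set ℝ} {l r : ℝ} (hA : A.Nonempty) (hB : B.Nonempty)
    (hAl : A ⊆ Iic l) (hBr : B ⊆ Ici r) : r - l ≤ setDist A B := by
  refine le_csInf (hA.image2 hB) ?_
  rintro _ ⟨a, ha, x, hx, rfl⟩
  rw [Real.dist_eq, abs_sub_comm]
  linarith [show a ≤ l from hAl ha, show r ≤ x from hBr hx, le_abs_self (x - a)]

theorem subset_Iic_iff_of_setDist_lt {A B : Set ℝ} {l r : ℝ} (hA : A.Nonempty)
    (hB : B.Nonempty) (hAs : A ⊆ Iic l ∨ A ⊆ Ici r) (hBs : B ⊆ Iic l ∨ B ⊆ Ici r)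
    (hAB : setDist A B < r - l) : A ⊆ Iic l ↔ B ⊆ Iic l := by
  have hlr : l < r := by linarith [setDist_nonneg A B]
  have not_both : ∀ {C : Set ℝ}, C.Nonempty → C ⊆ Ici r → ¬ C ⊆ Iic l :=
    fun ⟨x, hx⟩ hr hl => (hlr.trans_le (hr hx)).not_ge (hl hx)
  rcases hAs with hAl | hAr <;> rcases hBs with hBl | hBr
  · exact iff_of_true hAl hBl
  · linarith [sub_le_setDist hA hB hAl hBr]
  · linarith [sub_le_setDist hB hA hBl hAr, setDist_comm A B]
  · exact iff_of_false (not_both hA hAr) (not_both hB hBr)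

theorem subset_Iic_or_subset_Ici_of_gap {A F : Set ℝ} {a δ l r : ℝ} (hAF : A ⊆ F)
    (hA : A ⊆ Icc a (a + δ)) (hgap : Ioo l r ∩ F = ∅) (hlr : δ < r - l) :
    A ⊆ Iic l ∨ A ⊆ Ici r := by
  have hout : ∀ x ∈ A, x ≤ l ∨ r ≤ x := fun x hx => by
    by_contra! hlxr
    exact (eq_empty_iff_forall_notMem.1 hgap) x ⟨hlxr, hAF hx⟩
  by_contra! hboth
  obtain ⟨x, hxA, hlx⟩ := not_subset.1 hboth.1
  obtain ⟨y, hyA, hyr⟩ := not_subset.1 hboth.2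
  have hrx := (hout x hxA).resolve_left hlx
  have hyl := (hout y hyA).resolve_right hyr
  linarith [(hA hxA).2, (hA hyA).1]

variable {b dd : Fin m → ℝ} {I : Finset (Fin m)} {F : Set ℝ} {δ : ℝ}

theorem DeltaConn.refl {w : List (Fin m)} (hw : w ∈ IdxDelta b I δ) :
    DeltaConn b dd I F δ w w :=
  ⟨0, fun _ => w, rfl, rfl, fun _ _ => hw, fun _ h => absurd h (Nat.not_lt_zero _)⟩

theorem DeltaConn.mem_idxDelta {w w' : List (Fin m)} (h : DeltaConn b dd I F δ w w') :
    w' ∈ IdxDelta b I δ := by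
  obtain ⟨k, g, -, rfl, hmem, -⟩ := h
  exact hmem k le_rfl

theorem image_phiWord_subset_Iic_or_Ici (hb : ∀ i, 0 < b i) (hF₀₁ : F ⊆ Icc 0 1)
    (hF : F = ⋃ i ∈ I, (fun y => b i * y + dd i) '' F) {l r : ℝ} (hgap : Ioo l r ∩ F = ∅)
    (hlr : δ < r - l) {w : List (Fin m)} (hw : w ∈ IdxDelta b I δ) :
    phiWord b dd w '' F ⊆ Iic l ∨ phiWord b dd w '' F ⊆ Ici r := by
  refine subset_Iic_or_subset_Ici_of_gap (mapsTo_phiWord hF hw.2.1).image_subset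
    (a := phiWord b dd w 0) ?_ hgap hlr
  rintro _ ⟨x, hx, rfl⟩
  obtain ⟨hx₀, hx₁⟩ := hF₀₁ hx
  have hP := prod_map_pos hb w
  rw [phiWord_apply dd w x]
  constructor <;> nlinarith [hw.2.2.1]

/-- A gap of `F` longer than `δ` cannot be bridged by a `δ`-chain. -/
theorem DeltaConn.image_subset_Iic_iff (hb : ∀ i, 0 < b i) (hFne : F.Nonempty)
    (hF₀₁ : F ⊆ Icc 0 1) (hF : F = ⋃ i ∈ I, (fun y => b i * y + dd i) '' F) {l r : ℝ}
    (hgap : Ioo l r ∩ F = ∅) (hlr : δ < r - l) {w w' : List (Fin m)}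
    (h : DeltaConn b dd I F δ w w') :
    phiWord b dd w '' F ⊆ Iic l ↔ phiWord b dd w' '' F ⊆ Iic l := by
  obtain ⟨k, g, rfl, rfl, hmem, hdist⟩ := h
  have hside := fun n (hn : n ≤ k) =>
    image_phiWord_subset_Iic_or_Ici hb hF₀₁ hF hgap hlr (hmem n hn)
  suffices ∀ n ≤ k, (phiWord b dd (g 0) '' F ⊆ Iic l ↔ phiWord b dd (g n) '' F ⊆ Iic l) from
    this k le_rfl
  intro n hn
  induction n with
  | zero => rfl
  | succ n ih =>
    exact (ih (by omega)).trans (subset_Iic_iff_of_setDist_lt (hFne.image _) (hFne.image _)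
      (hside n (by omega)) (hside (n + 1) hn) ((hdist n hn).trans_lt hlr))

end Chains

namespace IsTiling

variable {b dd : Fin m → ℝ} (h : IsTiling b dd) {I : Finset (Fin m)} {F : Set ℝ}
  {u v δ t c : ℝ} {w : List (Fin m)}
include h

/-- If a stopping cylinder `W` at scale `t` lay strictly between two others, its copy of the gap
`(u, v)`, longer than `δ`, would separate two members of a `δ`-component. -/
theorem eq_or_eq_of_isStopping_between (hFne : F.Nonempty) (hF₀₁ : F ⊆ Icc 0 1)
    (hF : F = ⋃ i ∈ I, (fun y => b i * y + dd i) '' F) (hu : 0 ≤ u) (huv : u < v) (hv : v ≤ 1)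
    (hgap : Ioo u v ∩ F = ∅) (hc : 0 < c) (hcb : ∀ i, c ≤ b i) (hδ : δ ≤ c * t * (v - u))
    {W₁ W₂ W w₁ w₂ w' : List (Fin m)} (h₁ : IsStopping b t W₁) (h₂ : IsStopping b t W₂)
    (hW : IsStopping b t W) (hW₁ : W₁ <+: w₁) (hW₂ : W₂ <+: w₂) (hW' : W <+: w')
    (hw₁ : DeltaConn b dd I F δ w w₁) (hw₂ : DeltaConn b dd I F δ w w₂)
    (hw' : DeltaConn b dd I F δ w w')
    (hle₁ : phiWord b dd W₁ 0 ≤ phiWord b dd W 0) (hle₂ : phiWord b dd W 0 ≤ phiWord b dd W₂ 0) :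
    W = W₁ ∨ W = W₂ := by
  by_contra! hne
  have hW_ne : W ≠ [] := by
    rintro rfl
    exact hne.1 (IsStopping.eq_of_prefix h.pos h.le_one hW h₁ List.nil_prefix)
  have hlong : δ < phiWord b dd W v - phiWord b dd W u := by
    rw [phiWord_apply dd W v, phiWord_apply dd W u]
    nlinarith [hW.mul_lt_prod h.pos hc hcb hW_ne]
  have hgapW := h.Ioo_phiWord_inter_eq_empty hF₀₁ hF hu hv hgap
    (fun i hi => hw'.mem_idxDelta.2.1 i (hW'.subset hi))
  have hmono := (phiWord_strictMono dd h.pos W).monotone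
  have huv' := phiWord_strictMono dd h.pos W huv
  have hleft : phiWord b dd w₁ '' F ⊆ Iic (phiWord b dd W u) := by
    rintro _ ⟨x, hx, rfl⟩
    calc phiWord b dd w₁ x ≤ phiWord b dd W₁ 1 := (h.phiWord_mem_Icc_of_prefix hW₁ (hF₀₁ hx)).2
      _ ≤ phiWord b dd W 0 := h.phiWord_one_le_of_isStopping h₁ hW (Ne.symm hne.1) hle₁
      _ ≤ phiWord b dd W u := hmono hu
  have hright : phiWord b dd w₂ '' F ⊆ Ici (phiWord b dd W v) := by
    rintro _ ⟨x, hx, rfl⟩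
    calc phiWord b dd W v ≤ phiWord b dd W 1 := hmono hv
      _ ≤ phiWord b dd W₂ 0 := h.phiWord_one_le_of_isStopping hW h₂ hne.2 hle₂
      _ ≤ phiWord b dd w₂ x := (h.phiWord_mem_Icc_of_prefix hW₂ (hF₀₁ hx)).1
  have hsame := ((hw₁.image_subset_Iic_iff h.pos hFne hF₀₁ hF hgapW hlong).symm.trans
    (hw₂.image_subset_Iic_iff h.pos hFne hF₀₁ hF hgapW hlong)).1 hleft
  obtain ⟨y, hy⟩ := hFne.image (phiWord b dd w₂)
  linarith [show phiWord b dd W v ≤ y from hright hy, show y ≤ phiWord b dd W u from hsame hy]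

/-- `W₁` and `W₂` are the leftmost and the rightmost stopping prefixes of the component. -/
theorem exists_isStopping_prefixes (hFne : F.Nonempty) (hF₀₁ : F ⊆ Icc 0 1)
    (hF : F = ⋃ i ∈ I, (fun y => b i * y + dd i) '' F) (hu : 0 ≤ u) (huv : u < v) (hv : v ≤ 1)
    (hgap : Ioo u v ∩ F = ∅) (hc : 0 < c) (hcb : ∀ i, c ≤ b i) (hδ₀ : 0 < δ) (hδt : δ ≤ t)
    (hδ : δ ≤ c * t * (v - u)) (hw : w ∈ IdxDelta b I δ) :
    ∃ W₁ W₂, IsStopping b t W₁ ∧ IsStopping b t W₂ ∧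
      ∀ w', DeltaConn b dd I F δ w w' → W₁ <+: w' ∨ W₂ <+: w' := by
  set S := {w' | DeltaConn b dd I F δ w w'}
  have hS : S.Finite := (h.finite_and_ncard_mul_le_prod hδ₀ hc hcb (W := [])
    (fun w' hw' => ⟨hw'.mem_idxDelta.1, isStopping_of_mem_idxDelta hw'.mem_idxDelta⟩)
    fun _ _ => List.nil_prefix).1
  have hpre : ∀ w' ∈ S, ∃ W, W <+: w' ∧ IsStopping b t W := fun w' hw' =>
    exists_prefix_isStopping (hw'.mem_idxDelta.2.2.1.trans hδt)
  choose! P hP hPs using hpre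
  have hSne : S.Nonempty := ⟨w, DeltaConn.refl hw⟩
  obtain ⟨w₁, hw₁, hmin⟩ := S.exists_min_image (fun w' => phiWord b dd (P w') 0) hS hSne
  obtain ⟨w₂, hw₂, hmax⟩ := S.exists_max_image (fun w' => phiWord b dd (P w') 0) hS hSne
  refine ⟨P w₁, P w₂, hPs w₁ hw₁, hPs w₂ hw₂, fun w' hw' => ?_⟩
  rcases h.eq_or_eq_of_isStopping_between hFne hF₀₁ hF hu huv hv hgap hc hcb hδ (hPs w₁ hw₁)
      (hPs w₂ hw₂) (hPs w' hw') (hP w₁ hw₁) (hP w₂ hw₂) (hP w' hw') hw₁ hw₂ hw'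
      (hmin w' hw') (hmax w' hw') with heq | heq
  · exact Or.inl (heq ▸ hP w' hw')
  · exact Or.inr (heq ▸ hP w' hw')

theorem finite_and_ncard_mul_le_of_prefixes (hδ : 0 < δ) (hc : 0 < c) (hcb : ∀ i, c ≤ b i)
    {T : Set (List (Fin m))} (hT : ∀ w ∈ T, w ≠ [] ∧ IsStopping b δ w) {W₁ W₂ : List (Fin m)}
    (h₁ : IsStopping b t W₁) (h₂ : IsStopping b t W₂) (hW : ∀ w ∈ T, W₁ <+: w ∨ W₂ <+: w) :
    T.Finite ∧ T.ncard * (c * δ) ≤ 2 * t := by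
  have hclass := fun W => h.finite_and_ncard_mul_le_prod hδ hc hcb
    (T := {w ∈ T | W <+: w}) (fun w hw => hT w hw.1) fun _ hw => hw.2
  obtain ⟨hfin₁, hcard₁⟩ := hclass W₁
  obtain ⟨hfin₂, hcard₂⟩ := hclass W₂
  have hsub : T ⊆ {w ∈ T | W₁ <+: w} ∪ {w ∈ T | W₂ <+: w} := fun w hw =>
    (hW w hw).imp (⟨hw, ·⟩) (⟨hw, ·⟩)
  have hcard : (T.ncard : ℝ) ≤ {w ∈ T | W₁ <+: w}.ncard + {w ∈ T | W₂ <+: w}.ncard := by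
    exact_mod_cast (Set.ncard_le_ncard hsub (hfin₁.union hfin₂)).trans (Set.ncard_union_le _ _)
  refine ⟨(hfin₁.union hfin₂).subset hsub, ?_⟩
  nlinarith [h₁.1, h₂.1, mul_pos hc hδ]

end IsTiling

theorem card_delta_connected_le_general {m : ℕ} (b dd : Fin m → ℝ)
    (hb : ∀ i, 0 < b i) (hbs : ∑ i, b i = 1)
    (hd : ∀ i, dd i = ∑ k ∈ Finset.univ.filter (fun k => k < i), b k)
    (I : Finset (Fin m))
    (F : Set ℝ) (hFne : F.Nonempty) (hF01 : F ⊆ Set.Icc 0 1)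
    (hFattr : F = ⋃ i ∈ I, (fun y => b i * y + dd i) '' F)
    (u v : ℝ) (huv : u < v) (hsub : Set.Ioo u v ⊆ Set.Icc 0 1)
    (hgapF : Set.Ioo u v ∩ F = ∅)
    (δ : ℝ) (hδ : 0 < δ) (w : List (Fin m)) (hw : w ∈ IdxDelta b I δ) :
    {w' | DeltaConn b dd I F δ w w'}.Finite ∧
    ({w' | DeltaConn b dd I F δ w w'}.ncard : ℝ) ≤
      2 / ((v - u) * (⨅ i, b i) ^ 2) := by
  have h : IsTiling b dd := ⟨hb, hbs, hd⟩
  obtain ⟨hu, hv⟩ : 0 ≤ u ∧ v ≤ 1 := by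
    rw [← Icc_subset_Icc_iff huv.le, ← closure_Ioo huv.ne]
    exact closure_minimal hsub isClosed_Icc
  have : Nonempty (Fin m) := ⟨w.head hw.1⟩
  obtain ⟨i₀, hi₀⟩ := exists_eq_ciInf_of_finite (f := b)
  set c := ⨅ i, b i
  have hc : 0 < c := hi₀ ▸ hb i₀
  have hcb : ∀ i, c ≤ b i := ciInf_le (Finite.bddBelow_range b)
  -- at scale `t`, the copy of the gap `(u, v)` in a nonempty stopping cylinder is longer than `δ`
  set t := δ / ((v - u) * c)
  have hη : 0 < (v - u) * c := mul_pos (sub_pos.2 huv) hc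
  have hct : c * t * (v - u) = δ := by
    rw [show c * t * (v - u) = t * ((v - u) * c) by ring, div_mul_cancel₀ δ hη.ne']
  have hδt : δ ≤ t := le_div_self hδ.le hη
    (mul_le_one₀ (by linarith) hc.le ((hcb i₀).trans (h.le_one i₀)))
  obtain ⟨W₁, W₂, h₁, h₂, hW⟩ := h.exists_isStopping_prefixes hFne hF01 hFattr hu huv hv hgapF
    hc hcb hδ hδt hct.ge hw
  obtain ⟨hfin, hcard⟩ := h.finite_and_ncard_mul_le_of_prefixes hδ hc hcb
    (T := {w' | DeltaConn b dd I F δ w w'})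
    (fun w' hw' => ⟨hw'.mem_idxDelta.1, isStopping_of_mem_idxDelta hw'.mem_idxDelta⟩) h₁ h₂ hW
  refine ⟨hfin, ?_⟩
  rw [le_div_iff₀ (by positivity), ← mul_le_mul_iff_left₀ hδ]
  calc _ = _ * (c * δ) * ((v - u) * c) := by ring
    _ ≤ 2 * t * ((v - u) * c) := by gcongr
    _ = 2 * δ := by rw [← hct]; ring

/-- if the self-similar projection set `F = ⋃_{i ∈ 𝓘} φ_i(F)` (with
`𝓘 ⊊ {1,…,m}`) misses the open interval `(u, v) ⊆ [0,1]`, then for every `δ > 0` and every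
`w ∈ 𝓘_δ`, the set of words `δ`-connected to `w` is finite of cardinality at most
`2 η⁻¹ b_*⁻²`, where `η = v - u` and `b_* = min_i b i`. -/
theorem card_delta_connected_le {m : ℕ} (hm : 0 < m) (b dd : Fin m → ℝ)
    (hb : ∀ i, 0 < b i) (hbs : ∑ i, b i = 1)
    (hd : ∀ i, dd i = ∑ k ∈ Finset.univ.filter (fun k => k < i), b k)
    (I : Finset (Fin m)) (hIne : I.Nonempty) (hIproper : I ≠ Finset.univ)
    (F : Set ℝ) (hFne : F.Nonempty) (hFc : IsCompact F) (hF01 : F ⊆ Set.Icc 0 1)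
    (hFattr : F = ⋃ i ∈ I, (fun y => b i * y + dd i) '' F)
    (u v : ℝ) (huv : u < v) (hsub : Set.Ioo u v ⊆ Set.Icc 0 1)
    (hgapF : Set.Ioo u v ∩ F = ∅)
    (δ : ℝ) (hδ : 0 < δ) (w : List (Fin m)) (hw : w ∈ IdxDelta b I δ) :
    {w' | DeltaConn b dd I F δ w w'}.Finite ∧
    ({w' | DeltaConn b dd I F δ w w'}.ncard : ℝ) ≤
      2 / ((v - u) * (⨅ i, b i) ^ 2) :=
  card_delta_connected_le_general b dd hb hbs hd I F hFne hF01 hFattr u v huv hsub hgapF δ hδ w hw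
end

section
/- Let E be a Lalley–Gatzouras self-affine set with defining maps S_{ij}(x,y) = (a_{ij}x + c_{ij}, b_i y + d_i). If n_i ≠ 0 for every i ∈ {1,…,m} (i.e., every row contains at least one map), then E is not uniformly disconnected. -/
/-- The data of a Lalley–Gatzouras system: `m ≥ 2` rows of heights `b i` summing to `1`;
in row `i` there are `n i` maps with horizontal ratios `a i j ∈ (0, b i)` and horizontal
translations `c i j`, the corresponding rectangles lying in `[0,1]²`, disjoint, in rows. -/
structure LGSystem where
  m : ℕ
  hm : 2 ≤ m
  n : Fin m → ℕ
  b : Fin m → ℝ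
  a : (i : Fin m) → Fin (n i) → ℝ
  c : (i : Fin m) → Fin (n i) → ℝ
  b_pos : ∀ i, 0 < b i
  b_sum : ∑ i, b i = 1
  a_pos : ∀ i j, 0 < a i j
  a_lt_b : ∀ i j, a i j < b i
  a_sum : ∀ i, ∑ j, a i j ≤ 1
  c_nonneg : ∀ i j, 0 ≤ c i j
  c_sep : ∀ i (j k : Fin (n i)), (k : ℕ) = (j : ℕ) + 1 → a i j ≤ c i k - c i j
  c_last : ∀ i (j : Fin (n i)), (j : ℕ) + 1 = n i → a i j ≤ 1 - c i j

namespace LGSystem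

variable (Λ : LGSystem)

/-- `d i = b 1 + ⋯ + b (i-1)`: the bottom height of row `i`. -/
def d (i : Fin Λ.m) : ℝ := ∑ k ∈ Finset.univ.filter (fun k => k < i), Λ.b k

/-- The affine map `S i j (x, y) = (a i j * x + c i j, b i * y + d i)`. -/
def S (i : Fin Λ.m) (j : Fin (Λ.n i)) (p : ℝ × ℝ) : ℝ × ℝ :=
  (Λ.a i j * p.1 + Λ.c i j, Λ.b i * p.2 + Λ.d i)

/-- `E` is the attractor of the system: the (unique) nonempty compact set with
`E = ⋃_{(i,j)} S i j (E)`. -/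
def IsAttractor (E : Set (ℝ × ℝ)) : Prop :=
  E.Nonempty ∧ IsCompact E ∧ E = ⋃ (i : Fin Λ.m), ⋃ (j : Fin (Λ.n i)), Λ.S i j '' E

end LGSystem

/-
Because every row contains a map, the heights of points of `E` are dense in `[0, 1]`, so `E`
contains chains with steps of height `O(1/N)` climbing from height `0` to height `1`.
Iterating one map `S i j` gives an affine map `(x, y) ↦ (aᵏ x + c', bᵏ y + d')` of `E` into
itself with `aᵏ` negligible against `bᵏ`; it squeezes such a chain into a `bᵏ/(2C)`-chain in `E`
whose endpoints are `bᵏ/2` apart, which a uniform disconnectedness constant `C` forbids.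
-/

open Set Filter Topology

section Chains

variable {X : Type*} [PseudoMetricSpace X]

def IsEpsChain (E : Set X) (ε : ℝ) (q : ℕ → X) (N : ℕ) : Prop :=
  (∀ l ≤ N, q l ∈ E) ∧ ∀ l < N, dist (q l) (q (l + 1)) < ε

lemma UnifDisc.exists_forall_isEpsChain_dist_lt {E : Set X} (h : UnifDisc E) :
    ∃ C > (1 : ℝ), ∀ r > (0 : ℝ), ∀ q N, IsEpsChain E (r / C) q N → dist (q N) (q 0) < r := by
  obtain ⟨C, hC, hsep⟩ := h
  refine ⟨C, hC, fun r hr q N ⟨hqE, hstep⟩ => ?_⟩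
  have hq0 := hqE 0 N.zero_le
  obtain ⟨A, -, hball, hAr, hAsep⟩ := hsep (q 0) hq0 r hr
  have hqA : ∀ l ≤ N, q l ∈ A := by
    intro l
    induction l with
    | zero => exact fun _ => hball ⟨Metric.mem_ball_self (div_pos hr (by linarith)), hq0⟩
    | succ l ih =>
      intro hl
      by_contra hA
      exact (hstep l hl).not_ge (hAsep _ (ih (by omega)) _ ⟨hqE _ hl, hA⟩)
  exact hAr (hqA N le_rfl)

end Chains

def diagAffine (a c b d : ℝ) (p : ℝ × ℝ) : ℝ × ℝ := (a * p.1 + c, b * p.2 + d)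

lemma diagAffine_iterate (a c b d : ℝ) (k : ℕ) :
    ∃ c' d', (diagAffine a c b d)^[k] = diagAffine (a ^ k) c' (b ^ k) d' := by
  induction k with
  | zero => exact ⟨0, 0, by funext p; simp [diagAffine]⟩
  | succ k ih =>
    obtain ⟨c', d', h⟩ := ih
    refine ⟨a * c' + c, b * d' + d, ?_⟩
    rw [Function.iterate_succ', h]
    funext p
    simp only [Function.comp_apply, diagAffine, Prod.mk.injEq]
    constructor <;> ring

lemma dist_diagAffine {a b : ℝ} (ha : 0 ≤ a) (hb : 0 ≤ b) (c d : ℝ) (p q : ℝ × ℝ) :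
    dist (diagAffine a c b d p) (diagAffine a c b d q) =
      max (a * |p.1 - q.1|) (b * |p.2 - q.2|) := by
  simp only [Prod.dist_eq, Real.dist_eq, diagAffine]
  rw [show a * p.1 + c - (a * q.1 + c) = a * (p.1 - q.1) by ring,
    show b * p.2 + d - (b * q.2 + d) = b * (p.2 - q.2) by ring,
    abs_mul, abs_mul, abs_of_nonneg ha, abs_of_nonneg hb]

lemma exists_pow_mul_lt_pow {a b : ℝ} (ha : 0 ≤ a) (hab : a < b) (K : ℝ) :
    ∃ k : ℕ, a ^ k * K < b ^ k := by
  have hb : 0 < b := ha.trans_lt hab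
  have hlim : Tendsto (fun k : ℕ => (a / b) ^ k * K) atTop (𝓝 0) := by
    simpa using (tendsto_pow_atTop_nhds_zero_of_lt_one (div_nonneg ha hb.le)
      ((div_lt_one hb).mpr hab)).mul_const K
  obtain ⟨k, hk⟩ := (hlim.eventually (gt_mem_nhds one_pos)).exists
  rw [div_pow, div_mul_eq_mul_div, div_lt_one (pow_pos hb k)] at hk
  exact ⟨k, hk⟩

lemma exists_vertical_chain {E : Set (ℝ × ℝ)}
    (hdense : ∀ y ∈ Icc (0 : ℝ) 1, ∀ ε > 0, ∃ p ∈ E, |p.2 - y| ≤ ε) {N : ℕ} (hN : 0 < N) :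
    ∃ p : ℕ → ℝ × ℝ, (∀ l ≤ N, p l ∈ E) ∧ (∀ l < N, |(p l).2 - (p (l + 1)).2| ≤ 3 / N) ∧
      1 - 2 / N ≤ |(p N).2 - (p 0).2| := by
  have hN' : (0 : ℝ) < N := Nat.cast_pos.mpr hN
  choose p hpE hp using fun l : ℕ => hdense (min (l / N) 1)
    ⟨le_min (by positivity) zero_le_one, min_le_right _ _⟩ (1 / N) (by positivity)
  have hgrid : ∀ l ≤ N, |(p l).2 - l / N| ≤ 1 / N := fun l hl => by
    simpa [min_eq_left ((div_le_one hN').mpr (Nat.cast_le.mpr hl))] using hp l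
  refine ⟨p, fun l _ => hpE l, fun l hl => ?_, ?_⟩
  · have h₀ := abs_le.mp (hgrid l hl.le)
    have h₁ := abs_le.mp (hgrid (l + 1) hl)
    have hstep : ((l + 1 : ℕ) : ℝ) / N = l / N + 1 / N := by push_cast; ring
    have h3 : (3 : ℝ) / N = 3 * (1 / N) := by ring
    rw [abs_le]
    constructor <;> linarith [h₀.1, h₀.2, h₁.1, h₁.2]
  · have h₀ := abs_le.mp (hgrid 0 N.zero_le)
    have h₁ := abs_le.mp (hgrid N le_rfl)
    rw [div_self hN'.ne'] at h₁
    simp only [CharP.cast_eq_zero, zero_div, sub_zero] at h₀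
    have h2 : (2 : ℝ) / N = 2 * (1 / N) := by ring
    exact le_abs.mpr (Or.inl (by linarith [h₀.2, h₁.1]))

lemma exists_isEpsChain_of_mapsTo_diagAffine {E : Set (ℝ × ℝ)} {a b c d C W : ℝ} (ha : 0 ≤ a)
    (hb : 0 < b) (hC : 0 < C) (hW : ∀ ⦃p⦄, p ∈ E → ∀ ⦃q⦄, q ∈ E → dist p q ≤ W)
    (hflat : 2 * C * (a * W) < b) (hT : MapsTo (diagAffine a c b d) E E)
    (hdense : ∀ y ∈ Icc (0 : ℝ) 1, ∀ ε > 0, ∃ p ∈ E, |p.2 - y| ≤ ε) :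
    ∃ q N, IsEpsChain E (b / 2 / C) q N ∧ b / 2 ≤ dist (q N) (q 0) := by
  -- `6 * C < N` makes the vertical steps `3 * b / N` shorter than `b / (2 * C)`; `4 < N` keeps
  -- the endpoints `b * (1 - 2 / N) ≥ b / 2` apart
  obtain ⟨N, hN⟩ := exists_nat_gt (6 * C + 4)
  have hN' : (0 : ℝ) < N := by linarith
  obtain ⟨p, hpE, hstep, hend⟩ := exists_vertical_chain hdense (Nat.cast_pos.mp hN')
  refine ⟨diagAffine a c b d ∘ p, N, ⟨fun l hl => hT (hpE l hl), fun l hl => ?_⟩, ?_⟩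
  · have hx : |(p l).1 - (p (l + 1)).1| ≤ W :=
      (le_max_left _ _).trans (hW (hpE l hl.le) (hpE (l + 1) hl))
    have hy : 3 / (N : ℝ) < 1 / (2 * C) := by
      rw [div_lt_div_iff₀ hN' (by positivity)]; linarith
    simp only [Function.comp_apply, dist_diagAffine ha hb.le]
    refine max_lt ?_ ?_
    · calc a * |(p l).1 - (p (l + 1)).1| ≤ a * W := mul_le_mul_of_nonneg_left hx ha
        _ < b / 2 / C := by rw [div_div, lt_div_iff₀ (by positivity)]; linarith
    · calc b * |(p l).2 - (p (l + 1)).2| ≤ b * (3 / N) :=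
            mul_le_mul_of_nonneg_left (hstep l hl) hb.le
        _ < b * (1 / (2 * C)) := mul_lt_mul_of_pos_left hy hb
        _ = b / 2 / C := by ring
  · have h2 : 2 / (N : ℝ) ≤ 1 / 2 := by rw [div_le_div_iff₀ hN' two_pos]; linarith
    simp only [Function.comp_apply, dist_diagAffine ha hb.le]
    calc b / 2 ≤ b * (1 - 2 / N) := by nlinarith
      _ ≤ b * |(p N).2 - (p 0).2| := mul_le_mul_of_nonneg_left hend hb.le
      _ ≤ _ := le_max_right _ _

theorem not_unifDisc_of_mapsTo_diagAffine {E : Set (ℝ × ℝ)} (hE : Bornology.IsBounded E)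
    {a b c d : ℝ} (ha : 0 ≤ a) (hab : a < b) (hT : MapsTo (diagAffine a c b d) E E)
    (hdense : ∀ y ∈ Icc (0 : ℝ) 1, ∀ ε > 0, ∃ p ∈ E, |p.2 - y| ≤ ε) : ¬ UnifDisc E := by
  intro hud
  obtain ⟨C, hC, hchain⟩ := hud.exists_forall_isEpsChain_dist_lt
  obtain ⟨W, hW⟩ := Metric.isBounded_iff.mp hE
  obtain ⟨k, hk⟩ := exists_pow_mul_lt_pow ha hab (2 * C * W)
  obtain ⟨c', d', hTk⟩ := diagAffine_iterate a c b d k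
  have hbk : 0 < b ^ k := pow_pos (ha.trans_lt hab) k
  obtain ⟨q, N, hq, hfar⟩ := exists_isEpsChain_of_mapsTo_diagAffine (C := C) (pow_nonneg ha k) hbk
    (by linarith) hW (by linarith) (hTk ▸ hT.iterate k) hdense
  exact (hchain _ (by positivity) q N hq).not_ge hfar

lemma exists_sum_range_le_le_sum_range_succ {g : ℕ → ℝ} {m : ℕ} (hm : 0 < m) {y : ℝ}
    (hy₀ : 0 ≤ y) (hy : y ≤ ∑ k ∈ Finset.range m, g k) :
    ∃ i < m, ∑ k ∈ Finset.range i, g k ≤ y ∧ y ≤ ∑ k ∈ Finset.range (i + 1), g k := by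
  induction m with
  | zero => omega
  | succ m ih =>
    by_cases h : ∑ k ∈ Finset.range m, g k ≤ y
    · exact ⟨m, m.lt_succ_self, h, hy⟩
    · have hm' : 0 < m := Nat.pos_of_ne_zero (by rintro rfl; exact h (by simpa using hy₀))
      obtain ⟨i, him, hi⟩ := ih hm' (not_le.mp h).le
      exact ⟨i, by omega, hi⟩

namespace LGSystem

variable (Λ : LGSystem)

def bNat (k : ℕ) : ℝ := if h : k < Λ.m then Λ.b ⟨k, h⟩ else 0

lemma bNat_coe (i : Fin Λ.m) : Λ.bNat i = Λ.b i := by simp [bNat]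

lemma sum_range_bNat : ∑ k ∈ Finset.range Λ.m, Λ.bNat k = 1 := by
  simp only [← Fin.sum_univ_eq_sum_range, bNat_coe, Λ.b_sum]

lemma d_eq_sum_range_bNat (i : Fin Λ.m) : Λ.d i = ∑ k ∈ Finset.range i, Λ.bNat k := by
  rw [d, Finset.filter_gt_eq_Iio, ← Nat.Iio_eq_range, ← Fin.map_valEmbedding_Iio, Finset.sum_map]
  simp only [Fin.valEmbedding_apply, bNat_coe]

lemma exists_d_le_le_d_add_b {y : ℝ} (hy : y ∈ Icc (0 : ℝ) 1) :
    ∃ i, Λ.d i ≤ y ∧ y ≤ Λ.d i + Λ.b i := by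
  obtain ⟨i, him, hlo, hhi⟩ := exists_sum_range_le_le_sum_range_succ
    (by have := Λ.hm; omega) hy.1 (Λ.sum_range_bNat ▸ hy.2)
  refine ⟨⟨i, him⟩, ?_, ?_⟩
  · rwa [d_eq_sum_range_bNat]
  · rwa [d_eq_sum_range_bNat, ← bNat_coe, ← Finset.sum_range_succ]

lemma b_lt_one (i : Fin Λ.m) : Λ.b i < 1 := by
  have : Nontrivial (Fin Λ.m) := Fin.nontrivial_iff_two_le.mpr Λ.hm
  obtain ⟨i', hi'⟩ := exists_ne i
  simpa only [Λ.b_sum] using Finset.single_lt_sum hi' (Finset.mem_univ i) (Finset.mem_univ i')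
    (Λ.b_pos i') (fun k _ _ => (Λ.b_pos k).le)

lemma exists_b_le_lt_one : ∃ B < 1, ∀ i, Λ.b i ≤ B := by
  have : Nonempty (Fin Λ.m) := ⟨⟨0, by have := Λ.hm; omega⟩⟩
  obtain ⟨i, hi⟩ := Finite.exists_max Λ.b
  exact ⟨Λ.b i, Λ.b_lt_one i, hi⟩

variable {Λ} {E : Set (ℝ × ℝ)}

lemma mapsTo_S (hE : Λ.IsAttractor E) (i : Fin Λ.m) (j : Fin (Λ.n i)) :
    MapsTo (Λ.S i j) E E := fun p hp => by
  rw [hE.2.2]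
  exact mem_iUnion₂_of_mem (i := i) (j := j) (mem_image_of_mem _ hp)

lemma exists_mem_abs_snd_sub_le_mul (hE : Λ.IsAttractor E) (hn : ∀ i, Λ.n i ≠ 0) {B ε : ℝ}
    (hB : ∀ i, Λ.b i ≤ B) (h : ∀ y ∈ Icc (0 : ℝ) 1, ∃ p ∈ E, |p.2 - y| ≤ ε) :
    ∀ y ∈ Icc (0 : ℝ) 1, ∃ p ∈ E, |p.2 - y| ≤ B * ε := by
  intro y hy
  obtain ⟨i, hlo, hhi⟩ := Λ.exists_d_le_le_d_add_b hy
  have hbi := Λ.b_pos i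
  obtain ⟨p, hpE, hp⟩ := h ((y - Λ.d i) / Λ.b i)
    ⟨div_nonneg (by linarith) hbi.le, (div_le_one hbi).mpr (by linarith)⟩
  refine ⟨Λ.S i ⟨0, Nat.pos_of_ne_zero (hn i)⟩ p, mapsTo_S hE _ _ hpE, ?_⟩
  have hscale : Λ.b i * p.2 + Λ.d i - y = Λ.b i * (p.2 - (y - Λ.d i) / Λ.b i) := by
    field_simp; ring
  show |Λ.b i * p.2 + Λ.d i - y| ≤ B * ε
  rw [hscale, abs_mul, abs_of_pos hbi]
  exact mul_le_mul (hB i) hp (abs_nonneg _) (hbi.le.trans (hB i))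

lemma exists_mem_abs_snd_sub_le (hE : Λ.IsAttractor E) (hn : ∀ i, Λ.n i ≠ 0) :
    ∀ y ∈ Icc (0 : ℝ) 1, ∀ ε > 0, ∃ p ∈ E, |p.2 - y| ≤ ε := by
  obtain ⟨B, hB1, hB⟩ := Λ.exists_b_le_lt_one
  obtain ⟨p₀, hp₀⟩ := hE.1
  have hpow : ∀ k : ℕ, ∀ y ∈ Icc (0 : ℝ) 1, ∃ p ∈ E, |p.2 - y| ≤ B ^ k * (|p₀.2| + 1) := by
    intro k
    induction k with
    | zero =>
      intro y hy
      refine ⟨p₀, hp₀, ?_⟩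
      linarith [abs_sub p₀.2 y, abs_of_nonneg hy.1, hy.2]
    | succ k ih => simpa only [pow_succ', mul_assoc] using exists_mem_abs_snd_sub_le_mul hE hn hB ih
  intro y hy ε hε
  obtain ⟨k, hk⟩ := exists_pow_lt_of_lt_one (div_pos hε (by positivity : 0 < |p₀.2| + 1)) hB1
  obtain ⟨p, hpE, hp⟩ := hpow k y hy
  exact ⟨p, hpE, hp.trans ((lt_div_iff₀ (by positivity)).mp hk).le⟩

end LGSystem

/-- necessity: if every row of a Lalley–Gatzouras system contains at least one
map (`n i ≠ 0` for all `i`), then its attractor `E` is not uniformly disconnected. -/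
theorem not_unifDisc_of_all_rows_nonempty (Λ : LGSystem) (E : Set (ℝ × ℝ))
    (hE : Λ.IsAttractor E) (hn : ∀ i, Λ.n i ≠ 0) : ¬ UnifDisc E := by
  let i : Fin Λ.m := ⟨0, by have := Λ.hm; omega⟩
  let j : Fin (Λ.n i) := ⟨0, Nat.pos_of_ne_zero (hn i)⟩
  exact not_unifDisc_of_mapsTo_diagAffine hE.2.1.isBounded (Λ.a_pos i j).le (Λ.a_lt_b i j)
    (LGSystem.mapsTo_S hE i j) (LGSystem.exists_mem_abs_snd_sub_le hE hn)
end

section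
/- Let G ⊆ ℝ be a set with the property that for every open interval I there exists an open interval J ⊆ I with |J| ≥ μ|I| and J ∩ G = ∅ (for a fixed μ ∈ (0,1)). Then for any x₀ ∈ ℝ and δ > 0, there exist points a ∈ (x₀−2δ, x₀−δ) and b ∈ (x₀+δ, x₀+2δ) and a decomposition G = G' ∪ G'' with G' = G ∩ [a', a''] for suitable a' ≤ x₀−δ, a'' ≥ x₀+δ such that dist(G', G'') ≥ μδ and G ∩ (x₀−δ, x₀+δ) ⊆ G'. Consequently, the δh-neighborhoods satisfy: if h < μ/3 then dist(G'_{δh}, G''_{δh}) ≥ μδ/3, (x₀−δ, x₀+δ) ⊆ G'_{δh} ∪ ((x₀−δ,x₀+δ)∖G_{δh}), and |G'_{δh}| ≤ 4δ + 2δh, where S_{δh} denotes {x : dist(x,S) ≤ δh}. -/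
/-!
Porosity puts a gap of length at least `μδ` inside each of `(x₀ - 2δ, x₀ - δ)` and
`(x₀ + δ, x₀ + 2δ)`; cutting `G` at the right end `a'` of the left gap and the left end `a''` of
the right gap leaves every point of `G''` on the far side of a gap from `[a', a'']`, hence at
distance at least `μδ` from `G'` and from `(x₀ - δ, x₀ + δ)`. Thickening by `δh < μδ/3` loses at
most `2δh` of this separation, and keeps every point of `(x₀ - δ, x₀ + δ)` out of `G''_{δh}`.
-/

open Set Metric

section Thickening

variable {α : Type*} [PseudoMetricSpace α]

theorem sub_two_mul_le_dist_of_mem_cthickening {A B : Set α} {d t : ℝ} (ht : 0 ≤ t)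
    (hAB : ∀ a ∈ A, ∀ b ∈ B, d ≤ dist a b) {p q : α} (hp : p ∈ cthickening t A)
    (hq : q ∈ cthickening t B) : d - 2 * t ≤ dist p q := by
  refine le_of_forall_pos_lt_add fun ε hε => ?_
  have hnear : ∀ {S : Set α} {x : α}, x ∈ cthickening t S → ∃ s ∈ S, dist x s ≤ t + ε / 4 :=
    fun hx => by
      simpa using cthickening_subset_iUnion_closedBall_of_lt _ (by positivity) (by linarith) hx
  obtain ⟨a, ha, hpa⟩ := hnear hp
  obtain ⟨b, hb, hqb⟩ := hnear hq
  have hab : dist a b ≤ dist p a + dist p q + dist q b := by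
    linarith [dist_triangle4 a p q b, dist_comm a p]
  linarith [hAB a ha b hb]

theorem mem_cthickening_of_mem_cthickening_union {A B : Set α} {d t : ℝ} (ht : 0 ≤ t)
    (htd : t < d) {x : α} (hx : x ∈ cthickening t (A ∪ B)) (hxB : ∀ b ∈ B, d ≤ dist x b) :
    x ∈ cthickening t A := by
  rw [cthickening_union] at hx
  refine hx.resolve_right fun hx' => ?_
  obtain ⟨b, hb, hxb⟩ : ∃ b ∈ B, dist x b ≤ (t + d) / 2 := by
    simpa using cthickening_subset_iUnion_closedBall_of_lt B (by linarith) (by linarith) hx'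
  linarith [hxB b hb]

end Thickening

section Gaps

variable {G : Set ℝ} {x y z q : ℝ}

theorem sub_le_dist_of_disjoint_Ioo_left (hgap : Disjoint (Ioo x y) G) (hq : q ∈ G)
    (hqy : q < y) (hyz : y ≤ z) : y - x ≤ dist z q := by
  have hqx : q ≤ x := not_lt.1 fun hxq => hgap.ne_of_mem ⟨hxq, hqy⟩ hq rfl
  rw [Real.dist_eq, abs_of_nonneg (by linarith)]
  linarith

theorem sub_le_dist_of_disjoint_Ioo_right (hgap : Disjoint (Ioo x y) G) (hq : q ∈ G)
    (hxq : x < q) (hzx : z ≤ x) : y - x ≤ dist z q := by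
  have hyq : y ≤ q := not_lt.1 fun hqy => hgap.ne_of_mem ⟨hxq, hqy⟩ hq rfl
  rw [Real.dist_eq, abs_of_nonpos (by linarith)]
  linarith

theorem le_dist_of_disjoint_Ioo_of_notMem_Icc {x₁ y₁ x₂ y₂ d : ℝ}
    (hgap₁ : Disjoint (Ioo x₁ y₁) G) (hgap₂ : Disjoint (Ioo x₂ y₂) G)
    (hd₁ : d ≤ y₁ - x₁) (hd₂ : d ≤ y₂ - x₂) (hz : z ∈ Icc y₁ x₂) (hq : q ∈ G)
    (hq' : q ∉ Icc y₁ x₂) : d ≤ dist z q := by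
  rcases lt_or_ge q y₁ with hqy₁ | hy₁q
  · exact hd₁.trans (sub_le_dist_of_disjoint_Ioo_left hgap₁ hq hqy₁ hz.1)
  · have hx₂q : x₂ < q := not_le.1 fun hqx₂ => hq' ⟨hy₁q, hqx₂⟩
    exact hd₂.trans (sub_le_dist_of_disjoint_Ioo_right hgap₂ hq hx₂q hz.2)

end Gaps

/-- suppose every open interval `(x, y)` contains an open subinterval of
length at least `μ (y - x)` disjoint from `G`. Then for any `x₀` and `δ > 0` there are
suitable cut points `a' ∈ (x₀-2δ, x₀-δ]` and `a'' ∈ [x₀+δ, x₀+2δ)` such that, setting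
`G' = G ∩ [a', a'']` and `G'' = G \ G'`: `dist(G', G'') ≥ μδ` (pointwise),
`G ∩ (x₀-δ, x₀+δ) ⊆ G'`, and for every `h ∈ (0, μ/3)` the closed `δh`-neighborhoods satisfy
`dist(G'_{δh}, G''_{δh}) ≥ μδ/3`,
`(x₀-δ, x₀+δ) ⊆ G'_{δh} ∪ ((x₀-δ, x₀+δ) \ G_{δh})`, and `|G'_{δh}| ≤ 4δ + 2δh`. -/
theorem porous_splitting (G : Set ℝ) (μ : ℝ) (hμ : μ ∈ Set.Ioo (0 : ℝ) 1)
    (hpor : ∀ x y : ℝ, x < y → ∃ x' y' : ℝ, x ≤ x' ∧ x' < y' ∧ y' ≤ y ∧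
      μ * (y - x) ≤ y' - x' ∧ Set.Ioo x' y' ∩ G = ∅)
    (x₀ δ : ℝ) (hδ : 0 < δ) :
    ∃ a' a'' : ℝ, x₀ - 2 * δ < a' ∧ a' ≤ x₀ - δ ∧ x₀ + δ ≤ a'' ∧ a'' < x₀ + 2 * δ ∧
      ∀ G' G'' : Set ℝ, G' = G ∩ Set.Icc a' a'' → G'' = G \ G' →
        (∀ p ∈ G', ∀ q ∈ G'', μ * δ ≤ dist p q) ∧
        (G ∩ Set.Ioo (x₀ - δ) (x₀ + δ) ⊆ G') ∧
        ∀ h : ℝ, 0 < h → h < μ / 3 →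
          (∀ p ∈ Metric.cthickening (δ * h) G', ∀ q ∈ Metric.cthickening (δ * h) G'',
            μ * δ / 3 ≤ dist p q) ∧
          (Set.Ioo (x₀ - δ) (x₀ + δ) ⊆ Metric.cthickening (δ * h) G' ∪
            (Set.Ioo (x₀ - δ) (x₀ + δ) \ Metric.cthickening (δ * h) G)) ∧
          Metric.diam (Metric.cthickening (δ * h) G') ≤ 4 * δ + 2 * (δ * h) := by
  obtain ⟨hμ0, -⟩ := hμ
  obtain ⟨x₁, y₁, hx₁, -, hy₁, hlen₁, hgap₁⟩ := hpor (x₀ - 2 * δ) (x₀ - δ) (by linarith)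
  obtain ⟨x₂, y₂, hx₂, -, hy₂, hlen₂, hgap₂⟩ := hpor (x₀ + δ) (x₀ + 2 * δ) (by linarith)
  have hμδ : 0 < μ * δ := by positivity
  have hsep : ∀ z ∈ Icc y₁ x₂, ∀ q ∈ G \ (G ∩ Icc y₁ x₂), μ * δ ≤ dist z q :=
    fun z hz q hq => le_dist_of_disjoint_Ioo_of_notMem_Icc
      (disjoint_iff_inter_eq_empty.2 hgap₁) (disjoint_iff_inter_eq_empty.2 hgap₂)
      (by linarith) (by linarith) hz hq.1 fun hq' => hq.2 ⟨hq.1, hq'⟩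
  have hI : Ioo (x₀ - δ) (x₀ + δ) ⊆ Icc y₁ x₂ := fun z hz =>
    ⟨by linarith [hz.1], by linarith [hz.2]⟩
  refine ⟨y₁, x₂, by linarith, hy₁, hx₂, by linarith, ?_⟩
  rintro G' G'' rfl rfl
  refine ⟨fun p hp q hq => hsep p hp.2 q hq, fun z hz => ⟨hz.1, hI hz.2⟩, fun h h0 hh => ?_⟩
  have hδh : δ * h < μ * δ / 3 := by nlinarith
  refine ⟨fun p hp q hq => ?_, fun z hz => ?_, ?_⟩
  · linarith [sub_two_mul_le_dist_of_mem_cthickening (by positivity)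
      (fun p hp q hq => hsep p hp.2 q hq) hp hq]
  · by_cases hzG : z ∈ cthickening (δ * h) G
    · rw [← union_sdiff_cancel (inter_subset_left (s := G) (t := Icc y₁ x₂))] at hzG
      exact .inl (mem_cthickening_of_mem_cthickening_union (by positivity) (by linarith) hzG
        (hsep z (hI hz)))
    · exact .inr ⟨hz, hzG⟩
  · calc diam (cthickening (δ * h) (G ∩ Icc y₁ x₂))
        ≤ diam (G ∩ Icc y₁ x₂) + 2 * (δ * h) := diam_cthickening_le _ (by positivity)
      _ ≤ diam (Icc y₁ x₂) + 2 * (δ * h) := by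
        gcongr; exact diam_mono inter_subset_right (isBounded_Icc _ _)
      _ ≤ 4 * δ + 2 * (δ * h) := by rw [Real.diam_Icc (by linarith)]; linarith
end
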